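/- arXiv:2203.08313 — 12 statements merged into one kernel-verified Lean document; each statement's English description precedes it below -/
import Mathlib

section
/- Let n ≥ 1 be a natural number and let x_1, …, x_n be pairwise distinct non-negative real numbers. For each i define a_i := (∏_{j≠i} x_j) / (∏_{j≠i} (x_j − x_i)). Then ∏_{i=1}^n (1 + x_i)^{a_i} ≤ exp((1/n) ∏_{i=1}^n x_i). -/
/-!
The weight `a_i` is the `i`-th Lagrange basis polynomial of the nodes `x_j` evaluated at `0`, so
`∑ a_i log (1 + x_i) = L 0` for the interpolant `L` of `t ↦ log (1 + t)` at the nodes. The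
interpolation error formula (Rolle's theorem applied `n` times) yields `ξ ≥ 0` with
`log 1 - L 0 = (d/dt)ⁿ log (1 + t) |_ξ / n! * ∏ (0 - x_i)`, and with
`(d/dt)ⁿ log (1 + t) = (-1)ⁿ⁻¹ (n - 1)! / (1 + t)ⁿ` this says `L 0 = ∏ x_i / (n (1 + ξ)ⁿ) ≤ ∏ x_i / n`.
-/

open Finset Polynomial Real

theorem ContDiffAt.continuousAt_iteratedDeriv {𝕜 F : Type*} [NontriviallyNormedField 𝕜]
    [NormedAddCommGroup F] [NormedSpace 𝕜 F] {f : 𝕜 → F} {x : 𝕜} {n : WithTop ℕ∞} {m : ℕ}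
    (hf : ContDiffAt 𝕜 n f x) (hm : m ≤ n) : ContinuousAt (iteratedDeriv m f) x := by
  rw [iteratedDeriv_eq_equiv_comp]
  exact (ContinuousMultilinearMap.piFieldEquiv 𝕜 (Fin m) F).symm.continuous.continuousAt.comp
    (hf.iteratedFDeriv_right (m := 0) (by simpa using hm)).continuousAt

theorem exists_iteratedDeriv_eq_zero_of_strictMono {f : ℝ → ℝ} {s : Set ℝ} (hs : s.OrdConnected)
    {k : ℕ} (hf : ∀ m < k, ContinuousOn (iteratedDeriv m f) s) {p : Fin (k + 1) → ℝ}
    (hp : StrictMono p) (hps : ∀ i, p i ∈ s) (hfp : ∀ i, f (p i) = 0) :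
    ∃ ξ ∈ s, iteratedDeriv k f ξ = 0 := by
  induction k generalizing f with
  | zero => exact ⟨p 0, hps 0, by simpa using hfp 0⟩
  | succ k ih =>
    have hcont : ContinuousOn f s := by simpa using hf 0 k.succ_pos
    have hrolle (i : Fin (k + 1)) : ∃ c ∈ Set.Ioo (p i.castSucc) (p i.succ), deriv f c = 0 :=
      exists_deriv_eq_zero (hp i.castSucc_lt_succ)
        (hcont.mono (hs.out (hps _) (hps _))) (by rw [hfp, hfp])
    choose q hq hq0 using hrolle
    have hqmono : StrictMono q := by
      refine fun i j hij => (hq i).2.trans_le (le_trans ?_ (hq j).1.le)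
      exact hp.monotone (Fin.succ_le_castSucc_iff.mpr hij)
    obtain ⟨ξ, hξ, hξ0⟩ := ih (f := deriv f)
      (fun m hm => by simpa only [← iteratedDeriv_succ'] using hf (m + 1) (by omega)) hqmono
      (fun i => hs.out (hps _) (hps _) (Set.Ioo_subset_Icc_self (hq i))) hq0
    exact ⟨ξ, hξ, by rwa [iteratedDeriv_succ']⟩

theorem exists_iteratedDeriv_eq_zero_of_card_eq {f : ℝ → ℝ} {s : Set ℝ} (hs : s.OrdConnected)
    {k : ℕ} (hf : ∀ m < k, ContinuousOn (iteratedDeriv m f) s) {Z : Finset ℝ}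
    (hZ : #Z = k + 1) (hZs : ↑Z ⊆ s) (hfZ : ∀ z ∈ Z, f z = 0) :
    ∃ ξ ∈ s, iteratedDeriv k f ξ = 0 :=
  exists_iteratedDeriv_eq_zero_of_strictMono hs hf (Z.orderEmbOfFin hZ).strictMono
    (fun i => hZs (Z.orderEmbOfFin_mem hZ i)) (fun i => hfZ _ (Z.orderEmbOfFin_mem hZ i))

theorem Polynomial.iteratedDeriv_eval {𝕜 : Type*} [NontriviallyNormedField 𝕜] (P : 𝕜[X])
    (k : ℕ) :
    iteratedDeriv k (fun t => P.eval t) = fun t => (derivative^[k] P).eval t := by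
  induction k with
  | zero => simp
  | succ k ih =>
    funext t
    rw [iteratedDeriv_succ, ih, Polynomial.deriv, Function.iterate_succ_apply']

theorem Polynomial.iterate_derivative_prod_X_sub_C_card {R : Type*} [CommRing R] (Z : Finset R) :
    derivative^[#Z] (∏ z ∈ Z, (X - C z)) = (#Z).factorial := by
  simp [iterate_derivative_prod_X_sub_C le_rfl]

theorem exists_sub_eval_eq_iteratedDeriv_mul_prod {f : ℝ → ℝ} {s : Set ℝ} (hs : s.OrdConnected)
    {Z : Finset ℝ} (hZs : ↑Z ⊆ s) (hf : ∀ x ∈ s, ContDiffAt ℝ #Z f x) {P : ℝ[X]}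
    (hP : P.degree < #Z) (hPf : ∀ z ∈ Z, P.eval z = f z) {y : ℝ} (hy : y ∈ s) :
    ∃ ξ ∈ s, f y - P.eval y = iteratedDeriv #Z f ξ / (#Z).factorial * ∏ z ∈ Z, (y - z) := by
  by_cases hyZ : y ∈ Z
  · exact ⟨y, hy, by rw [hPf y hyZ, sub_self, prod_eq_zero hyZ (sub_self y), mul_zero]⟩
  set ω : ℝ[X] := ∏ z ∈ Z, (X - C z)
  have hω : ω.eval y ≠ 0 := by
    simp only [ω, eval_prod, eval_sub, eval_X, eval_C]
    exact prod_ne_zero_iff.mpr fun z hz => sub_ne_zero.mpr (ne_of_mem_of_not_mem hz hyZ).symm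
  -- `c` makes `f - (P + c ω)` vanish at `y` as well as on `Z`, so Rolle applies to it.
  set c := (f y - P.eval y) / ω.eval y
  set Q := P + C c * ω
  have hQ : derivative^[#Z] Q = C (c * (#Z).factorial) := by
    rw [iterate_map_add, iterate_derivative_eq_zero_of_degree_lt hP,
      iterate_derivative_C_mul, iterate_derivative_prod_X_sub_C_card]
    simp
  have hderiv : ∀ m ≤ #Z, ∀ x ∈ s,
      iteratedDeriv m (fun t => f t - Q.eval t) x =
        iteratedDeriv m f x - (derivative^[m] Q).eval x := by
    intro m hm x hx
    have hQsmooth : ContDiff ℝ m (fun t => Q.eval t) := Q.contDiff_aeval m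
    rw [iteratedDeriv_fun_sub ((hf x hx).of_le (by exact_mod_cast hm)) hQsmooth.contDiffAt,
      Polynomial.iteratedDeriv_eval]
  have hcont : ∀ m < #Z, ContinuousOn (iteratedDeriv m fun t => f t - Q.eval t) s := by
    intro m hm
    refine ContinuousOn.congr (fun x hx => ?_) (fun x hx => hderiv m hm.le x hx)
    exact ((hf x hx).continuousAt_iteratedDeriv (by exact_mod_cast hm.le)).continuousWithinAt.sub
      (Polynomial.continuous _).continuousWithinAt
  have hzero : ∀ z ∈ insert y Z, f z - Q.eval z = 0 := by
    intro z hz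
    rcases mem_insert.mp hz with rfl | hz
    · simp [Q, c, div_mul_cancel₀ _ hω]
    · simp [Q, ω, hPf z hz, eval_prod, prod_eq_zero hz]
  obtain ⟨ξ, hξ, hξ0⟩ := exists_iteratedDeriv_eq_zero_of_card_eq hs hcont
    (card_insert_of_notMem hyZ) (coe_insert y Z ▸ Set.insert_subset hy hZs) hzero
  refine ⟨ξ, hξ, ?_⟩
  rw [hderiv _ le_rfl ξ hξ, hQ, eval_C, sub_eq_zero] at hξ0
  have hωy : ∏ z ∈ Z, (y - z) = ω.eval y := by simp [ω, eval_prod]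
  rw [hξ0, hωy, mul_div_cancel_right₀ _ (by positivity), div_mul_cancel₀ _ hω]

theorem deriv_log_one_add : deriv (fun t : ℝ => log (1 + t)) = fun t => (1 + t)⁻¹ := by
  funext t
  rw [deriv_comp_const_add, deriv_log']

theorem iteratedDeriv_succ_log_one_add (m : ℕ) (t : ℝ) :
    iteratedDeriv (m + 1) (fun t : ℝ => log (1 + t)) t =
      (-1) ^ m * m.factorial * (1 + t) ^ (-1 - m : ℤ) := by
  rw [iteratedDeriv_succ', deriv_log_one_add, iteratedDeriv_eq_iterate]
  simpa [add_comm] using congr_fun (iter_deriv_inv_linear m (1 : ℝ) 1) t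

theorem Lagrange.eval_basis {F ι : Type*} [Field F] [DecidableEq ι] (s : Finset ι) (v : ι → F)
    (i : ι) (y : F) :
    (Lagrange.basis s v i).eval y = ∏ j ∈ s.erase i, (y - v j) / (v i - v j) := by
  simp [Lagrange.basis, Lagrange.basisDivisor, eval_prod, div_eq_inv_mul]

theorem exists_eval_zero_interpolate_log_one_add_eq {ι : Type*} [DecidableEq ι] {s : Finset ι}
    {v : ι → ℝ} (hv : Set.InjOn v s) (hv0 : ∀ i ∈ s, 0 ≤ v i) (hs : s.Nonempty) :
    ∃ ξ, 0 ≤ ξ ∧ (Lagrange.interpolate s v fun i => log (1 + v i)).eval 0 =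
      (∏ i ∈ s, v i) / #s * (1 + ξ) ^ (-#s : ℤ) := by
  set L := Lagrange.interpolate s v fun i => log (1 + v i)
  have hcard : #(s.image v) = #s := card_image_of_injOn hv
  obtain ⟨m, hm⟩ : ∃ m, #s = m + 1 := Nat.exists_eq_add_one.mpr hs.card_pos
  obtain ⟨ξ, hξ, hξeq⟩ := exists_sub_eval_eq_iteratedDeriv_mul_prod (f := fun t => log (1 + t))
    (s := Set.Ici 0) Set.ordConnected_Ici (Z := s.image v) (P := L) (y := 0)
    (by simpa [Set.subset_def] using hv0)
    (fun t ht => (contDiffAt_const.add contDiffAt_id).log (by simp only [id]; linarith [ht.out]))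
    (hcard ▸ Lagrange.degree_interpolate_lt _ hv)
    (by simpa [L] using fun i hi => Lagrange.eval_interpolate_at_node _ hv hi)
    Set.self_mem_Ici
  refine ⟨ξ, hξ, ?_⟩
  rw [hcard, hm, iteratedDeriv_succ_log_one_add, prod_image hv] at hξeq
  simp only [zero_sub, prod_neg, hm, add_zero, log_one] at hξeq
  rw [show (-1 - m : ℤ) = -(m + 1 : ℕ) by push_cast; ring, Nat.factorial_succ, Nat.cast_mul]
    at hξeq
  have hsign : (-1 : ℝ) ^ m * (-1) ^ (m + 1) = -1 := by
    rw [← pow_add]; exact Odd.neg_one_pow ⟨m, by ring⟩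
  rw [hm]
  field_simp at hξeq ⊢
  linear_combination -hξeq - ((1 + ξ) ^ (-((m + 1 : ℕ) : ℤ)) * ∏ i ∈ s, v i) * hsign

theorem eval_zero_interpolate_log_one_add_le {ι : Type*} [DecidableEq ι] {s : Finset ι}
    {v : ι → ℝ} (hv : Set.InjOn v s) (hv0 : ∀ i ∈ s, 0 ≤ v i) (hs : s.Nonempty) :
    (Lagrange.interpolate s v fun i => log (1 + v i)).eval 0 ≤ 1 / #s * ∏ i ∈ s, v i := by
  obtain ⟨ξ, hξ, hL⟩ := exists_eval_zero_interpolate_log_one_add_eq hv hv0 hs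
  rw [hL, div_eq_inv_mul, one_div]
  refine mul_le_of_le_one_right (by positivity [prod_nonneg hv0]) ?_
  exact zpow_le_one_of_nonpos₀ (by linarith) (by simp)

theorem multivariate_basic_inequality (n : ℕ) (hn : 1 ≤ n) (x : Fin n → ℝ)
    (hx : ∀ i, 0 ≤ x i) (hinj : Function.Injective x) :
    ∏ i, (1 + x i) ^
        ((∏ j ∈ Finset.univ.erase i, x j) / (∏ j ∈ Finset.univ.erase i, (x j - x i))) ≤
      Real.exp ((1 / n) * ∏ i, x i) := by
  have hweight (i : Fin n) : (Lagrange.basis univ x i).eval 0 =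
      (∏ j ∈ univ.erase i, x j) / ∏ j ∈ univ.erase i, (x j - x i) := by
    rw [Lagrange.eval_basis, ← prod_div_distrib]
    refine prod_congr rfl fun j _ => ?_
    rw [zero_sub, ← neg_sub, neg_div_neg_eq]
  have hbound := eval_zero_interpolate_log_one_add_le hinj.injOn (fun i _ => hx i)
    (univ_nonempty_iff.mpr ⟨⟨0, hn⟩⟩)
  rw [Lagrange.interpolate_apply, eval_finsetSum, card_univ, Fintype.card_fin] at hbound
  refine (prod_congr rfl fun i _ => rpow_def_of_pos (by linarith [hx i]) _).trans_le ?_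
  rw [← exp_sum]
  exact exp_le_exp.mpr (by simpa [hweight] using hbound)
end

section
/- Let n ≥ 1 be a natural number and let x_1, …, x_n be pairwise distinct strictly positive real numbers. For each i define a_i := (∏_{j≠i} x_j) / (∏_{j≠i} (x_j − x_i)). Then ∏_{i=1}^n (1 + x_i)^{a_i} < exp((1/n) ∏_{i=1}^n x_i) (strict inequality). -/
open Finset

private lemma lemA {n : ℕ} (hn : 1 ≤ n) (x : Fin n → ℝ) (hx0 : ∀ i, x i ≠ 0)
    (hinj : Function.Injective x) (t : ℝ) :
    ∑ i, ∏ j ∈ Finset.univ.erase i, ((1 + t * x j) / (x j - x i)) = t ^ (n - 1) := by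
  set v : Fin n → ℝ := fun i => -(x i)⁻¹ with hv
  have hvinj : Set.InjOn v ↑(Finset.univ : Finset (Fin n)) := by
    intro i _ j _ h
    apply hinj
    have := neg_injective h
    exact inv_injective this
  have hdeg : ((Polynomial.X : Polynomial ℝ) ^ (n - 1)).degree < (Finset.univ : Finset (Fin n)).card := by
    rw [Polynomial.degree_X_pow, Finset.card_univ, Fintype.card_fin]
    exact_mod_cast Nat.sub_lt hn one_pos
  have key := congrArg (Polynomial.eval t)
    (Lagrange.eq_interpolate (f := (Polynomial.X : Polynomial ℝ) ^ (n - 1)) hvinj hdeg)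
  simp only [Lagrange.interpolate_apply, Lagrange.basis, Lagrange.basisDivisor,
    Polynomial.eval_finset_sum, Polynomial.eval_mul, Polynomial.eval_C, Polynomial.eval_prod,
    Polynomial.eval_pow, Polynomial.eval_X, Polynomial.eval_sub] at key
  rw [key]
  refine Finset.sum_congr rfl fun i _ => ?_
  have hcard : (Finset.univ.erase i).card = n - 1 := by
    rw [Finset.card_erase_of_mem (Finset.mem_univ i), Finset.card_univ, Fintype.card_fin]
  rw [← hcard, ← Finset.prod_const (v i), ← Finset.prod_mul_distrib]
  refine Finset.prod_congr rfl fun j hj => ?_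
  have hji : j ≠ i := (Finset.mem_erase.mp hj).1
  have hxy : x j - x i ≠ 0 := sub_ne_zero.mpr (fun h => hji (hinj h))
  have hxy' : x i - x j ≠ 0 := sub_ne_zero.mpr (fun h => hji.symm (hinj h))
  have hd : v i - v j = (x i - x j) / (x i * x j) := by
    simp only [hv]
    rw [eq_div_iff (mul_ne_zero (hx0 i) (hx0 j))]
    field_simp [hx0 i, hx0 j]
    ring
  rw [hd, inv_div]
  simp only [hv]
  field_simp [hx0 i, hx0 j, hxy, hxy']
  ring

private lemma lemB {n : ℕ} (hn : 1 ≤ n) (x : Fin n → ℝ) (hx0 : ∀ i, x i ≠ 0)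
    (hinj : Function.Injective x) (t : ℝ) (ht : ∀ j, 1 + t * x j ≠ 0) :
    ∑ i, ((∏ j ∈ Finset.univ.erase i, x j) / (∏ j ∈ Finset.univ.erase i, (x j - x i)))
        * (x i / (1 + t * x i))
      = t ^ (n - 1) * ∏ j, (x j / (1 + t * x j)) := by
  rw [← lemA hn x hx0 hinj t, Finset.sum_mul]
  refine Finset.sum_congr rfl fun i _ => ?_
  rw [← Finset.mul_prod_erase _ (fun j => x j / (1 + t * x j)) (Finset.mem_univ i)]
  rw [mul_left_comm, ← Finset.prod_mul_distrib]
  have hstep : ∀ j ∈ Finset.univ.erase i,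
      (1 + t * x j) / (x j - x i) * (x j / (1 + t * x j)) = x j / (x j - x i) := by
    intro j hj
    have h1 := ht j
    have h2 : x j - x i ≠ 0 := sub_ne_zero.mpr fun h => (Finset.mem_erase.mp hj).1 (hinj h)
    field_simp
  rw [Finset.prod_congr rfl hstep, Finset.prod_div_distrib]
  ring

theorem multivariate_basic_inequality_strict (n : ℕ) (hn : 1 ≤ n) (x : Fin n → ℝ)
    (hx : ∀ i, 0 < x i) (hinj : Function.Injective x) :
    ∏ i, (1 + x i) ^
        ((∏ j ∈ Finset.univ.erase i, x j) / (∏ j ∈ Finset.univ.erase i, (x j - x i))) <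
      Real.exp ((1 / n) * ∏ i, x i) := by
  have hx0 : ∀ i, x i ≠ 0 := fun i => (hx i).ne'
  have h1x : ∀ i, (0 : ℝ) < 1 + x i := fun i => by linarith [hx i]
  have hden : ∀ t ∈ Set.Icc (0 : ℝ) 1, ∀ j, 0 < 1 + t * x j := by
    intro t ht j
    nlinarith [hx j, ht.1]
  set a : Fin n → ℝ := fun i =>
    (∏ j ∈ Finset.univ.erase i, x j) / (∏ j ∈ Finset.univ.erase i, (x j - x i)) with ha
  -- rewrite LHS as an exponential
  have hlhs : ∏ i, (1 + x i) ^ (a i) = Real.exp (∑ i, a i * Real.log (1 + x i)) := by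
    rw [Real.exp_sum]
    refine Finset.prod_congr rfl fun i _ => ?_
    rw [Real.rpow_def_of_pos (h1x i), mul_comm]
  -- continuity of integrands
  have hcont : ∀ i, ContinuousOn (fun t : ℝ => x i / (1 + t * x i)) (Set.Icc 0 1) := by
    intro i
    exact continuousOn_const.div
      (Continuous.continuousOn (by continuity)) (fun t ht => (hden t ht i).ne')
  -- log as an integral
  have hlog : ∀ i, Real.log (1 + x i) = ∫ t in (0:ℝ)..1, x i / (1 + t * x i) := by
    intro i
    have huIcc : Set.uIcc (0:ℝ) 1 = Set.Icc 0 1 := Set.uIcc_of_le zero_le_one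
    have hd : ∀ t ∈ Set.uIcc (0:ℝ) 1,
        HasDerivAt (fun s => Real.log (1 + s * x i)) (x i / (1 + t * x i)) t := by
      intro t ht
      rw [huIcc] at ht
      have h1 : (0:ℝ) < 1 + t * x i := hden t ht i
      have := (((hasDerivAt_id t).mul_const (x i)).const_add 1).log h1.ne'
      simpa using this
    have hie : IntervalIntegrable (fun t : ℝ => x i / (1 + t * x i)) MeasureTheory.volume 0 1 := by
      apply ContinuousOn.intervalIntegrable
      rw [Set.uIcc_of_le (zero_le_one : (0:ℝ) ≤ 1)]
      exact hcont i
    have := intervalIntegral.integral_eq_sub_of_hasDerivAt hd hie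
    rw [this]
    simp
  -- exchange sum and integral
  have hsum : ∑ i, a i * Real.log (1 + x i)
      = ∫ t in (0:ℝ)..1, ∑ i, a i * (x i / (1 + t * x i)) := by
    rw [intervalIntegral.integral_finset_sum]
    · exact Finset.sum_congr rfl fun i _ => by
        rw [hlog i, intervalIntegral.integral_const_mul]
    · intro i _
      apply ContinuousOn.intervalIntegrable
      rw [Set.uIcc_of_le (zero_le_one : (0:ℝ) ≤ 1)]
      exact continuousOn_const.mul (hcont i)
  -- rewrite the integrand using the key identity
  have hint_eq : (∫ t in (0:ℝ)..1, ∑ i, a i * (x i / (1 + t * x i)))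
      = ∫ t in (0:ℝ)..1, t ^ (n - 1) * ∏ j, (x j / (1 + t * x j)) := by
    apply intervalIntegral.integral_congr
    intro t ht
    rw [Set.uIcc_of_le zero_le_one] at ht
    exact lemB hn x hx0 hinj t (fun j => (hden t ht j).ne')
  -- strict integral inequality
  have hfinal : (∫ t in (0:ℝ)..1, t ^ (n - 1) * ∏ j, (x j / (1 + t * x j)))
      < ∫ t in (0:ℝ)..1, t ^ (n - 1) * ∏ j, x j := by
    apply intervalIntegral.integral_lt_integral_of_continuousOn_of_le_of_exists_lt one_pos
    · exact (continuous_pow _).continuousOn.mul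
        (continuousOn_finset_prod _ (fun j _ => hcont j))
    · exact ((continuous_pow _).mul continuous_const).continuousOn
    · intro t ht
      have ht' : t ∈ Set.Icc (0:ℝ) 1 := ⟨ht.1.le, ht.2⟩
      apply mul_le_mul_of_nonneg_left _ (pow_nonneg ht.1.le _)
      apply Finset.prod_le_prod
      · intro j _
        exact div_nonneg (hx j).le (hden t ht' j).le
      · intro j _
        apply div_le_self (hx j).le
        nlinarith [ht.1, hx j]
    · refine ⟨1, Set.right_mem_Icc.mpr zero_le_one, ?_⟩
      rw [one_pow, one_mul, one_mul]
      apply Finset.prod_lt_prod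
      · intro j _
        exact div_pos (hx j) (hden 1 (Set.right_mem_Icc.mpr zero_le_one) j)
      · intro j _
        apply div_le_self (hx j).le
        nlinarith [hx j]
      · obtain ⟨i⟩ : Nonempty (Fin n) := ⟨⟨0, hn⟩⟩
        refine ⟨i, Finset.mem_univ i, ?_⟩
        rw [div_lt_iff₀ (by nlinarith [hx i])]
        nlinarith [hx i]
  -- value of the right integral
  have hval : (∫ t in (0:ℝ)..1, t ^ (n - 1) * ∏ j, x j) = (1 / n) * ∏ i, x i := by
    rw [intervalIntegral.integral_mul_const, integral_pow]
    have h1 : ((n - 1 : ℕ) : ℝ) + 1 = n := by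
      rw [← Nat.cast_add_one, Nat.sub_add_cancel hn]
    have h2 : n - 1 + 1 = n := Nat.sub_add_cancel hn
    rw [h1, h2, one_pow, zero_pow (by omega)]
    ring
  calc ∏ i, (1 + x i) ^ (a i) = Real.exp (∑ i, a i * Real.log (1 + x i)) := hlhs
    _ < Real.exp ((1 / n) * ∏ i, x i) := by
        rw [Real.exp_lt_exp, hsum, hint_eq, ← hval]
        exact hfinal
end

section
/- Let n ≥ 1 be a natural number and let x_1, …, x_n be pairwise distinct non-negative real numbers, with a_i := (∏_{j≠i} x_j) / (∏_{j≠i} (x_j − x_i)). Then ∏_{i=1}^n (1 + x_i)^{a_i} = exp((1/n) ∏_{i=1}^n x_i) holds if and only if x_i = 0 for some i ∈ {1, …, n}. -/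
/-!
If all `x i > 0`, put `G s = (∏ x i) s ^ n / n - ∑ a i log (1 + x i s)`, so that `G 0 = 0`.
Partial fractions (from the Lagrange identity `∑ ℓ i = 1`) give
`∑ a i x i / (1 + x i s) = (∏ x i) s ^ (n - 1) / ∏ (1 + x i s)`, hence
`G' s = (∏ x i) s ^ (n - 1) (1 - 1 / ∏ (1 + x i s)) > 0` on `(0, 1)` and `G 1 > 0`: the two sides
differ. If `x k = 0`, then `a i = 0` for `i ≠ k` and the `k`-th base is `1`, so both sides are `1`.
-/

open Finset Polynomial Real

section

variable {ι F : Type*} [Fintype ι]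

theorem prod_rpow_eq_exp_sum_mul_log {b : ι → ℝ} (hb : ∀ i, 0 < b i) (e : ι → ℝ) :
    ∏ i, b i ^ e i = exp (∑ i, e i * log (b i)) := by
  rw [exp_sum]
  exact prod_congr rfl fun i _ => by rw [rpow_def_of_pos (hb i), mul_comm]

theorem hasDerivAt_sum_mul_log_one_add_mul (a x : ι → ℝ) {s : ℝ} (hs : ∀ i, 1 + x i * s ≠ 0) :
    HasDerivAt (fun s => ∑ i, a i * log (1 + x i * s)) (∑ i, a i * (x i / (1 + x i * s))) s := by
  refine HasDerivAt.fun_sum fun i _ => HasDerivAt.const_mul (a i) ?_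
  simpa [div_eq_inv_mul] using
    (((hasDerivAt_id s).const_mul (x i)).const_add 1).log (hs i)

variable [DecidableEq ι] [Field F]

-- `∑ i, ℓ i y = 1` for the Lagrange basis `ℓ` of the nodes `x`.
theorem sum_prod_sub_div_prod_sub_eq_one [Nonempty ι] {x : ι → F}
    (hx : Function.Injective x) (y : F) :
    ∑ i, (∏ j ∈ univ.erase i, (y - x j)) / ∏ j ∈ univ.erase i, (x i - x j) = 1 := by
  have := congrArg (eval y) (Lagrange.sum_basis hx.injOn univ_nonempty)
  simpa [Lagrange.basis, Lagrange.basisDivisor, eval_finsetSum, eval_prod, prod_mul_distrib,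
    div_eq_mul_inv, mul_comm] using this

theorem sum_prod_one_add_mul_div_prod_sub [Nonempty ι] {x : ι → F}
    (hx : Function.Injective x) {s : F} (hs : s ≠ 0) :
    ∑ i, (∏ j ∈ univ.erase i, (1 + x j * s)) / ∏ j ∈ univ.erase i, (x j - x i) =
      s ^ (Fintype.card ι - 1) := by
  have hcard : ∀ i : ι, #(univ.erase i) = Fintype.card ι - 1 := fun i => by
    rw [card_erase_of_mem (mem_univ i), card_univ]
  calc _ = ∑ i, s ^ (Fintype.card ι - 1) *
        ((∏ j ∈ univ.erase i, (-s⁻¹ - x j)) / ∏ j ∈ univ.erase i, (x i - x j)) := by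
        refine sum_congr rfl fun i _ => ?_
        have hnum : ∏ j ∈ univ.erase i, (1 + x j * s) =
            (-s) ^ (Fintype.card ι - 1) * ∏ j ∈ univ.erase i, (-s⁻¹ - x j) := by
          rw [← hcard i, ← prod_const, ← prod_mul_distrib]
          exact prod_congr rfl fun j _ => by field_simp; ring
        have hden : ∏ j ∈ univ.erase i, (x j - x i) =
            (-1) ^ (Fintype.card ι - 1) * ∏ j ∈ univ.erase i, (x i - x j) := by
          rw [← hcard i, ← prod_const, ← prod_mul_distrib]
          exact prod_congr rfl fun j _ => by ring
        rw [hnum, hden, neg_pow s, mul_assoc, mul_div_mul_left _ _ (pow_ne_zero _ (by norm_num))]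
        ring
    _ = s ^ (Fintype.card ι - 1) := by
        rw [← mul_sum, sum_prod_sub_div_prod_sub_eq_one hx, mul_one]

noncomputable def basicExponent (x : ι → F) (i : ι) : F :=
  (∏ j ∈ univ.erase i, x j) / ∏ j ∈ univ.erase i, (x j - x i)

theorem basicExponent_eq_zero {x : ι → F} {i k : ι} (hk : x k = 0) (hik : i ≠ k) :
    basicExponent x i = 0 := by
  rw [basicExponent, prod_eq_zero (mem_erase.2 ⟨hik.symm, mem_univ k⟩) hk, zero_div]

theorem sum_basicExponent_mul_div_one_add_mul [Nonempty ι] {x : ι → F}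
    (hx : Function.Injective x) {s : F} (hs : s ≠ 0) (hx₁ : ∀ i, 1 + x i * s ≠ 0) :
    ∑ i, basicExponent x i * (x i / (1 + x i * s)) =
      (∏ i, x i) * s ^ (Fintype.card ι - 1) / ∏ i, (1 + x i * s) := by
  rw [← sum_prod_one_add_mul_div_prod_sub hx hs, mul_sum, sum_div]
  refine sum_congr rfl fun i _ => ?_
  have hden : ∏ j ∈ univ.erase i, (x j - x i) ≠ 0 :=
    prod_ne_zero_iff.2 fun j hj => sub_ne_zero.2 fun h => (mem_erase.1 hj).1 (hx h)
  rw [basicExponent, ← mul_prod_erase univ x (mem_univ i),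
    ← mul_prod_erase univ (fun j => 1 + x j * s) (mem_univ i)]
  have hrest : ∏ j ∈ univ.erase i, (1 + x j * s) ≠ 0 := prod_ne_zero_iff.2 fun j _ => hx₁ j
  generalize ∏ j ∈ univ.erase i, (1 + x j * s) = R at hrest ⊢
  field_simp

theorem sum_basicExponent_mul_log_one_add_lt [Nonempty ι] {x : ι → ℝ}
    (hx : Function.Injective x) (hpos : ∀ i, 0 < x i) :
    ∑ i, basicExponent x i * log (1 + x i) < (∏ i, x i) / Fintype.card ι := by
  set n := Fintype.card ι
  set P := ∏ i, x i
  have hn₀ : n ≠ 0 := Fintype.card_ne_zero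
  have hn : (n : ℝ) ≠ 0 := Nat.cast_ne_zero.2 hn₀
  have hx₁ : ∀ s : ℝ, 0 ≤ s → ∀ i, 0 < 1 + x i * s := fun s hs i => by
    nlinarith [mul_nonneg (hpos i).le hs]
  set G : ℝ → ℝ := fun s => P * s ^ n / n - ∑ i, basicExponent x i * log (1 + x i * s)
  have hG : ∀ s, 0 ≤ s →
      HasDerivAt G (P * s ^ (n - 1) - ∑ i, basicExponent x i * (x i / (1 + x i * s))) s := by
    intro s hs
    have hpow : HasDerivAt (fun s : ℝ => P * s ^ n / n) (P * s ^ (n - 1)) s :=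
      (((hasDerivAt_pow n s).const_mul P).div_const (n : ℝ)).congr_deriv
        (by rw [mul_left_comm, mul_div_cancel_left₀ _ hn])
    exact hpow.sub
      (hasDerivAt_sum_mul_log_one_add_mul _ x fun i => (hx₁ s hs i).ne')
  have hG' : ∀ s ∈ Set.Ioo (0 : ℝ) 1,
      0 < P * s ^ (n - 1) - ∑ i, basicExponent x i * (x i / (1 + x i * s)) := by
    rintro s ⟨hs₀, -⟩
    rw [sum_basicExponent_mul_div_one_add_mul hx hs₀.ne' fun i => (hx₁ s hs₀.le i).ne',
      sub_pos]
    refine div_lt_self (mul_pos (prod_pos fun i _ => hpos i) (pow_pos hs₀ _)) ?_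
    simpa using prod_lt_prod_of_nonempty (f := fun _ => (1 : ℝ)) (fun _ _ => one_pos)
      (fun i _ => lt_add_of_pos_right 1 (mul_pos (hpos i) hs₀)) univ_nonempty
  have hmono : StrictMonoOn G (Set.Icc 0 1) := by
    refine strictMonoOn_of_deriv_pos (convex_Icc 0 1)
      (fun s hs => (hG s hs.1).continuousAt.continuousWithinAt) ?_
    rw [interior_Icc]
    exact fun s hs => (hG s hs.1.le).deriv ▸ hG' s hs
  have h01 := hmono (Set.left_mem_Icc.2 zero_le_one) (Set.right_mem_Icc.2 zero_le_one) one_pos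
  simpa [G, zero_pow hn₀] using h01

end

theorem multivariate_basic_inequality_eq_iff (n : ℕ) (hn : 1 ≤ n) (x : Fin n → ℝ)
    (hx : ∀ i, 0 ≤ x i) (hinj : Function.Injective x) :
    (∏ i, (1 + x i) ^
        ((∏ j ∈ Finset.univ.erase i, x j) / (∏ j ∈ Finset.univ.erase i, (x j - x i))) =
      Real.exp ((1 / n) * ∏ i, x i)) ↔ ∃ i, x i = 0 := by
  have : Nonempty (Fin n) := ⟨⟨0, hn⟩⟩
  change (∏ i, (1 + x i) ^ basicExponent x i = _) ↔ _
  constructor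
  · intro heq
    by_contra! hne
    have hpos : ∀ i, 0 < x i := fun i => (hx i).lt_of_ne' (hne i)
    rw [prod_rpow_eq_exp_sum_mul_log (fun i => by linarith [hpos i]), exp_eq_exp] at heq
    have hlt := sum_basicExponent_mul_log_one_add_lt hinj hpos
    rw [heq, Fintype.card_fin, one_div_mul_eq_div] at hlt
    exact lt_irrefl _ hlt
  · rintro ⟨k, hk⟩
    rw [prod_eq_zero (mem_univ k) hk, mul_zero, exp_zero]
    refine prod_eq_one fun i _ => ?_
    rcases eq_or_ne i k with rfl | hik
    · rw [hk, add_zero, one_rpow]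
    · rw [basicExponent_eq_zero hk hik, rpow_zero]
end

section
/- Let n ≥ 1 be a natural number and let x_1, …, x_n be pairwise distinct strictly positive real numbers. Let f(x) := ln(1 + x)/x for x > 0. Then ∑_{i=1}^n f(x_i) / ∏_{j=1, j≠i}^n (x_j − x_i) < 1/n. -/
/-!
Since `log (1 + x) / x = ∫₀¹ (1 + x t)⁻¹ dt`, the sum is the integral over `[0, 1]` of
`∑ᵢ Pᵢ⁻¹ (1 + xᵢ t)⁻¹` with `Pᵢ = ∏_{j ≠ i} (xⱼ - xᵢ)`. Partial fractions with respect to the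
nodes `-xᵢ`, evaluated at `1 / t`, turn this integrand into `t ^ (n - 1) / ∏ⱼ (1 + xⱼ t)`,
which is strictly below `t ^ (n - 1)` for `t > 0`; and `∫₀¹ t ^ (n - 1) dt = 1 / n`.
-/

open Finset Polynomial

namespace Lagrange

variable {ι F : Type*} [DecidableEq ι] [Field F] {s : Finset ι} {v : ι → F} {z : F}

theorem sum_nodalWeight_mul_inv_sub (hvs : Set.InjOn v s) (hs : s.Nonempty)
    (hz : ∀ i ∈ s, z ≠ v i) :
    ∑ i ∈ s, nodalWeight s v i * (z - v i)⁻¹ = (∏ i ∈ s, (z - v i))⁻¹ := by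
  rw [← eval_nodal]
  refine eq_inv_of_mul_eq_one_right ?_
  simpa only [Pi.one_apply, interpolate_one hvs hs, eval_one, mul_one] using
    (eval_interpolate_not_at_node 1 hz).symm

end Lagrange

theorem sum_inv_prod_sub_mul_inv_one_add_mul {ι F : Type*} [DecidableEq ι] [Field F]
    {s : Finset ι} {x : ι → F} (hx : Set.InjOn x s) (hs : s.Nonempty) {t : F} (ht : t ≠ 0)
    (hxt : ∀ i ∈ s, 1 + x i * t ≠ 0) :
    ∑ i ∈ s, (∏ j ∈ s.erase i, (x j - x i))⁻¹ * (1 + x i * t)⁻¹ =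
      t ^ (#s - 1) / ∏ i ∈ s, (1 + x i * t) := by
  have hfac : ∀ i, 1 + x i * t = t * (t⁻¹ - (-x) i) := fun i => by
    simp only [Pi.neg_apply]; field_simp; ring
  have hnodes : ∀ i ∈ s, t⁻¹ ≠ (-x) i := fun i hi h => hxt i hi <| by
    rw [hfac, h, sub_self, mul_zero]
  have hterm : ∀ i ∈ s, (∏ j ∈ s.erase i, (x j - x i))⁻¹ * (1 + x i * t)⁻¹ =
      t⁻¹ * (Lagrange.nodalWeight s (-x) i * (t⁻¹ - (-x) i)⁻¹) := fun i _ => by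
    simp only [Lagrange.nodalWeight, Pi.neg_apply, neg_sub_neg, prod_inv_distrib, hfac, mul_inv]
    ring
  rw [sum_congr rfl hterm, ← mul_sum,
    Lagrange.sum_nodalWeight_mul_inv_sub (v := -x) (neg_injective.comp_injOn hx) hs hnodes]
  simp only [hfac, prod_mul_distrib, prod_const]
  obtain ⟨k, hk⟩ := Nat.exists_eq_add_one_of_ne_zero hs.card_pos.ne'
  rw [hk, Nat.add_sub_cancel, pow_succ]
  have hprod_ne : ∏ i ∈ s, (t⁻¹ - (-x) i) ≠ 0 :=
    prod_ne_zero_iff.2 fun i hi => sub_ne_zero.2 (hnodes i hi)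
  field_simp

theorem integral_inv_one_add_mul {x : ℝ} (hx : -1 < x) (hx0 : x ≠ 0) :
    ∫ t in (0 : ℝ)..1, (1 + x * t)⁻¹ = Real.log (1 + x) / x := by
  simp only [add_comm 1 (x * _)]
  rw [intervalIntegral.integral_comp_mul_add (fun u => u⁻¹) hx0, integral_inv]
  · simp [div_eq_inv_mul, add_comm]
  · exact Set.notMem_uIcc_of_lt (by simp) (by simp; linarith)

theorem sum_inv_prod_sub_mul_inv_one_add_mul_lt_pow {ι : Type*} [DecidableEq ι] {s : Finset ι}
    {x : ι → ℝ} (hx : ∀ i ∈ s, 0 < x i) (hinj : Set.InjOn x s) (hs : s.Nonempty) {t : ℝ}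
    (ht : 0 < t) :
    ∑ i ∈ s, (∏ j ∈ s.erase i, (x j - x i))⁻¹ * (1 + x i * t)⁻¹ < t ^ (#s - 1) := by
  have hgt : ∀ i ∈ s, 1 < 1 + x i * t := fun i hi => by nlinarith [hx i hi]
  rw [sum_inv_prod_sub_mul_inv_one_add_mul hinj hs ht.ne' fun i hi => by linarith [hgt i hi]]
  refine div_lt_self (pow_pos ht _) ?_
  simpa using prod_lt_prod_of_nonempty (fun _ _ => one_pos) hgt hs

theorem divided_difference_sum_lt (n : ℕ) (hn : 1 ≤ n) (x : Fin n → ℝ)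
    (hx : ∀ i, 0 < x i) (hinj : Function.Injective x) :
    ∑ i, (Real.log (1 + x i) / x i) / (∏ j ∈ Finset.univ.erase i, (x j - x i)) <
      1 / n := by
  have hne : (univ : Finset (Fin n)).Nonempty := univ_nonempty_iff.2 ⟨⟨0, hn⟩⟩
  have hcont : ∀ i, ContinuousOn (fun t => (1 + x i * t)⁻¹) (Set.Icc 0 1) := fun i =>
    ContinuousOn.inv₀ (by fun_prop) fun t ht => by nlinarith [hx i, ht.1]
  have hlt t (ht : 0 < t) := sum_inv_prod_sub_mul_inv_one_add_mul_lt_pow (fun i _ => hx i)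
    hinj.injOn hne ht
  rw [card_univ, Fintype.card_fin] at hlt
  calc ∑ i, (Real.log (1 + x i) / x i) / (∏ j ∈ univ.erase i, (x j - x i))
      = ∫ t in (0 : ℝ)..1, ∑ i, (∏ j ∈ univ.erase i, (x j - x i))⁻¹ * (1 + x i * t)⁻¹ := by
        rw [intervalIntegral.integral_finsetSum fun i _ =>
          ((hcont i).intervalIntegrable_of_Icc zero_le_one).const_mul _]
        refine sum_congr rfl fun i _ => ?_
        rw [intervalIntegral.integral_const_mul,
          integral_inv_one_add_mul (by linarith [hx i]) (hx i).ne', div_eq_inv_mul]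
    _ < ∫ t in (0 : ℝ)..1, t ^ (n - 1) :=
        intervalIntegral.integral_lt_integral_of_continuousOn_of_le_of_exists_lt zero_lt_one
          (continuousOn_finsetSum _ fun i _ => continuousOn_const.mul (hcont i))
          (continuous_pow _).continuousOn (fun t ht => (hlt t ht.1).le)
          ⟨1, by simp, hlt 1 one_pos⟩
    _ = 1 / n := by
        rw [integral_pow, Nat.sub_add_cancel hn, Nat.cast_sub hn, zero_pow (by omega)]
        simp
end

section
/- Let f(x) := ln(1 + x)/x for x > 0. For every natural number n ≥ 0 and every x > 0, the n-th derivative of f satisfies (−1)^n f^{(n)}(x) = n! · ∫_0^1 t^n / (1 + t·x)^{n+1} dt. -/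
/-! Substituting `u = 1 + t x` gives `log (1 + x) / x = ∫₀¹ dt / (1 + t x)`. For `t ∈ [0, 1]` the
`x`-derivative of `t ^ n / (1 + t x) ^ (n + 1)` is bounded by `n + 1` uniformly in `x > 0`, so one
may differentiate under the integral sign, which multiplies by `-(n + 1)` and raises `n` by one;
induction on `n` produces the factor `(-1) ^ n n!`. -/

open Real Set intervalIntegral MeasureTheory

theorem one_le_one_add_mul {t x : ℝ} (ht : 0 ≤ t) (hx : 0 ≤ x) : 1 ≤ 1 + t * x :=
  le_add_of_nonneg_right (mul_nonneg ht hx)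

theorem log_one_add_div_eq_integral {x : ℝ} (hx₀ : x ≠ 0) (hx : -1 < x) :
    log (1 + x) / x = ∫ t in (0 : ℝ)..1, 1 / (1 + t * x) := by
  have h0 : (0 : ℝ) ∉ uIcc (1 + x * 0) (1 + x * 1) := by
    rw [mul_zero, mul_one, add_zero, mem_uIcc]
    rintro (h | h) <;> linarith
  simp_rw [mul_comm _ x]
  rw [integral_comp_add_mul (fun u => 1 / u) hx₀, integral_one_div h0]
  simp [div_eq_inv_mul]

theorem hasDerivAt_pow_div_one_add_mul_pow (n : ℕ) {t x : ℝ} (h : 1 + t * x ≠ 0) :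
    HasDerivAt (fun y => t ^ n / (1 + t * y) ^ (n + 1))
      (-((n + 1) * (t ^ (n + 1) / (1 + t * x) ^ (n + 2)))) x := by
  have hlin : HasDerivAt (fun y => 1 + t * y) t x := by
    simpa using ((hasDerivAt_id x).const_mul t).const_add 1
  refine ((hasDerivAt_const x (t ^ n)).fun_div (hlin.fun_pow (n + 1))
    (pow_ne_zero _ h)).congr_deriv ?_
  rw [Nat.add_sub_cancel]
  field_simp
  push_cast
  ring

theorem continuousOn_pow_div_one_add_mul_pow (m k : ℕ) {x : ℝ} (hx : 0 ≤ x) :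
    ContinuousOn (fun t : ℝ => t ^ m / (1 + t * x) ^ k) (Ici 0) := by
  refine ContinuousOn.div (by fun_prop) (by fun_prop) fun t ht => ?_
  exact pow_ne_zero _ (zero_lt_one.trans_le (one_le_one_add_mul ht hx)).ne'

theorem pow_div_one_add_mul_pow_le_one (m k : ℕ) {t x : ℝ} (ht : t ∈ Icc 0 1) (hx : 0 ≤ x) :
    t ^ m / (1 + t * x) ^ k ≤ 1 := by
  have hden := one_le_pow₀ (n := k) (one_le_one_add_mul ht.1 hx)
  rw [div_le_one (zero_lt_one.trans_le hden)]
  exact (pow_le_one₀ ht.1 ht.2).trans hden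

theorem hasDerivAt_integral_pow_div_one_add_mul_pow (n : ℕ) {x : ℝ} (hx : 0 < x) :
    HasDerivAt (fun y => ∫ t in (0 : ℝ)..1, t ^ n / (1 + t * y) ^ (n + 1))
      (-((n + 1) * ∫ t in (0 : ℝ)..1, t ^ (n + 1) / (1 + t * x) ^ (n + 2))) x := by
  have hIoc : uIoc (0 : ℝ) 1 ⊆ Ici 0 := by
    rw [uIoc_of_le zero_le_one]; exact fun t ht => ht.1.le
  have hmeas : ∀ m k {y : ℝ}, 0 ≤ y →
      AEStronglyMeasurable (fun t : ℝ => t ^ m / (1 + t * y) ^ k) (volume.restrict (uIoc 0 1)) :=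
    fun m k y hy =>
      ((continuousOn_pow_div_one_add_mul_pow m k hy).mono hIoc).aestronglyMeasurable
        measurableSet_uIoc
  have key := intervalIntegral.hasDerivAt_integral_of_dominated_loc_of_deriv_le
    (μ := volume) (a := 0) (b := 1)
    (F' := fun y t => -((n + 1) * (t ^ (n + 1) / (1 + t * y) ^ (n + 2))))
    (bound := fun _ => (n + 1 : ℝ)) (Ioi_mem_nhds hx)
    (eventually_gt_nhds hx |>.mono fun y hy => hmeas n (n + 1) hy.le)
    (ContinuousOn.intervalIntegrable_of_Icc zero_le_one
      ((continuousOn_pow_div_one_add_mul_pow n (n + 1) hx.le).mono Icc_subset_Ici_self))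
    ((hmeas (n + 1) (n + 2) hx.le).const_mul _).neg
    (Filter.Eventually.of_forall fun t ht y hy => ?bound)
    intervalIntegrable_const
    (Filter.Eventually.of_forall fun t ht y hy =>
      hasDerivAt_pow_div_one_add_mul_pow n
        (zero_lt_one.trans_le (one_le_one_add_mul (hIoc ht) (hy.le))).ne')
  · simpa only [intervalIntegral.integral_neg, intervalIntegral.integral_const_mul] using key.2
  · rw [uIoc_of_le zero_le_one] at ht
    have h0 : 0 ≤ t ^ (n + 1) / (1 + t * y) ^ (n + 2) :=
      div_nonneg (pow_nonneg ht.1.le _)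
        (pow_nonneg (zero_le_one.trans (one_le_one_add_mul ht.1.le hy.le)) _)
    rw [norm_neg, Real.norm_of_nonneg (by positivity)]
    exact mul_le_of_le_one_right (by positivity)
      (pow_div_one_add_mul_pow_le_one _ _ (Ioc_subset_Icc_self ht) (hy.le))

theorem eqOn_iteratedDeriv_log_one_add_div (n : ℕ) :
    EqOn (iteratedDeriv n fun y : ℝ => log (1 + y) / y)
      (fun x => (-1) ^ n * n.factorial * ∫ t in (0 : ℝ)..1, t ^ n / (1 + t * x) ^ (n + 1))
      (Ioi 0) := by
  induction n with
  | zero =>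
    intro x hx
    simpa using log_one_add_div_eq_integral (ne_of_gt hx) (neg_one_lt_zero.trans hx)
  | succ n ih =>
    intro x hx
    rw [iteratedDeriv_succ, (ih.eventuallyEq_of_mem (Ioi_mem_nhds hx)).deriv_eq,
      ((hasDerivAt_integral_pow_div_one_add_mul_pow n hx).const_mul _).deriv, pow_succ,
      Nat.factorial_succ]
    push_cast
    ring

theorem iteratedDeriv_log_div_self (n : ℕ) (x : ℝ) (hx : 0 < x) :
    (-1 : ℝ) ^ n * iteratedDeriv n (fun y : ℝ => Real.log (1 + y) / y) x =
      (n.factorial : ℝ) * ∫ t in (0:ℝ)..1, t ^ n / (1 + t * x) ^ (n + 1) := by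
  rw [eqOn_iteratedDeriv_log_one_add_div n hx, ← mul_assoc, ← mul_assoc, ← mul_pow, neg_one_mul,
    neg_neg, one_pow, one_mul]
end

section
/- The function f(x) := ln(1 + x)/x, defined for x > 0, is strictly completely monotone: for every natural number n ≥ 0 and every x > 0, (−1)^n f^{(n)}(x) > 0. -/
/-!
With `y = x / (1 + x)` one has `log (1 + x) = -log (1 - y) = ∑ y ^ (k + 1) / (k + 1)`. Let `R n x`
(`logRemainder n x`) be the remainder of this series after `n` terms, positive for `x > 0`.
Since `R n' x = x ^ n / (1 + x) ^ (n + 1)`, the derivative of `R n x / x ^ (n + 1)` is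
`-(n + 1) R (n + 1) x / x ^ (n + 2)`, so by induction
`(log (1 + x) / x)⁽ⁿ⁾ = (-1) ^ n n! R n x / x ^ (n + 1)`.
-/

open Real Finset
open scoped Nat

noncomputable def logRemainder (n : ℕ) (x : ℝ) : ℝ :=
  log (1 + x) - ∑ k ∈ range n, (x / (1 + x)) ^ (k + 1) / (k + 1)

theorem logRemainder_zero (x : ℝ) : logRemainder 0 x = log (1 + x) := by
  simp [logRemainder]

theorem logRemainder_succ (n : ℕ) (x : ℝ) :
    logRemainder (n + 1) x = logRemainder n x - (x / (1 + x)) ^ (n + 1) / (n + 1) := by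
  simp only [logRemainder, sum_range_succ]
  ring

theorem logRemainder_pos {x : ℝ} (hx : 0 < x) (n : ℕ) : 0 < logRemainder n x := by
  set y := x / (1 + x)
  have hy0 : 0 < y := by positivity
  have hy1 : y < 1 := (div_lt_one (by positivity)).2 (by linarith)
  have hlog : -log (1 - y) = log (1 + x) := by
    rw [one_sub_div (by positivity : (1 : ℝ) + x ≠ 0), add_sub_cancel_right, one_div, log_inv,
      neg_neg]
  have htail := hasSum_pow_div_log_of_abs_lt_one (abs_lt.2 ⟨by linarith, hy1⟩)
  rw [hlog, ← hasSum_nat_add_iff' n] at htail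
  exact hasSum_lt (f := 0) (fun k => by positivity) (i := 0) (by positivity) hasSum_zero htail

theorem hasDerivAt_logRemainder (n : ℕ) {x : ℝ} (hx : 1 + x ≠ 0) :
    HasDerivAt (logRemainder n) (x ^ n / (1 + x) ^ (n + 1)) x := by
  have hden : HasDerivAt (fun y => 1 + y) 1 x := (hasDerivAt_id x).const_add 1
  have hy : HasDerivAt (fun y => y / (1 + y)) (1 / (1 + x) ^ 2) x :=
    ((hasDerivAt_id' x).fun_div hden hx).congr_deriv (by ring)
  induction n with
  | zero =>
    simp only [funext logRemainder_zero]
    simpa using hden.log hx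
  | succ n ih =>
    simp only [funext (logRemainder_succ n)]
    refine (ih.fun_sub ((hy.fun_pow (n + 1)).div_const ((n : ℝ) + 1))).congr_deriv ?_
    rw [Nat.add_sub_cancel, div_pow]
    push_cast
    field_simp
    ring

theorem hasDerivAt_logRemainder_div_pow (n : ℕ) {x : ℝ} (hx : x ≠ 0) (hx1 : 1 + x ≠ 0) :
    HasDerivAt (fun y => logRemainder n y / y ^ (n + 1))
      (-(n + 1) * logRemainder (n + 1) x / x ^ (n + 2)) x := by
  refine ((hasDerivAt_logRemainder n hx1).fun_div (hasDerivAt_pow (n + 1) x)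
    (pow_ne_zero _ hx)).congr_deriv ?_
  rw [logRemainder_succ, Nat.add_sub_cancel, div_pow]
  push_cast
  field_simp
  ring

theorem iteratedDeriv_log_one_add_div_self (n : ℕ) {x : ℝ} (hx : x ≠ 0) (hx1 : 1 + x ≠ 0) :
    iteratedDeriv n (fun y => log (1 + y) / y) x
      = (-1) ^ n * n ! * (logRemainder n x / x ^ (n + 1)) := by
  induction n generalizing x with
  | zero => simp [logRemainder_zero]
  | succ n ih =>
    have hU : IsOpen {y : ℝ | y ≠ 0 ∧ 1 + y ≠ 0} :=
      isOpen_ne.inter (isOpen_ne_fun (continuous_const.add continuous_id) continuous_const)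
    have heq : iteratedDeriv n (fun y => log (1 + y) / y)
        =ᶠ[nhds x] fun y => (-1) ^ n * n ! * (logRemainder n y / y ^ (n + 1)) :=
      Filter.eventually_of_mem (hU.mem_nhds ⟨hx, hx1⟩) fun y hy => ih hy.1 hy.2
    rw [iteratedDeriv_succ, heq.deriv_eq,
      ((hasDerivAt_logRemainder_div_pow n hx hx1).const_mul _).deriv, Nat.factorial_succ]
    push_cast
    ring

theorem log_div_self_strictly_completely_monotone (n : ℕ) (x : ℝ) (hx : 0 < x) :
    0 < (-1 : ℝ) ^ n * iteratedDeriv n (fun y : ℝ => Real.log (1 + y) / y) x := by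
  rw [iteratedDeriv_log_one_add_div_self n hx.ne' (by positivity), ← mul_assoc, ← mul_assoc,
    ← pow_add, Even.neg_one_pow ⟨n, rfl⟩, one_mul]
  have hR := logRemainder_pos hx n
  positivity
end

section
/- Let f(x) := ln(1 + x)/x for x > 0. For every natural number n ≥ 0, the one-sided limit as x → 0⁺ of (−1)^n f^{(n)}(x) exists and equals n!/(n + 1). -/
/-!
For `0 < |x| < 1` the logarithm series gives `log (1 + x) / x = ∑ (-1)^k x^k / (k + 1)`, so on
`(0, 1)` the function agrees with the sum `g` of this power series, which is analytic at `0`.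
Hence `f⁽ⁿ⁾ = g⁽ⁿ⁾` on `(0, 1)`, and `g⁽ⁿ⁾` is continuous at `0` with
`g⁽ⁿ⁾(0) = n! · (-1)ⁿ / (n + 1)`.
-/

open FormalMultilinearSeries Filter Topology Set Nat

theorem FormalMultilinearSeries.tendsto_iteratedDeriv_ofScalarsSum {𝕜 : Type*}
    [NontriviallyNormedField 𝕜] [CompleteSpace 𝕜] [CharZero 𝕜] {c : ℕ → 𝕜}
    (hc : 0 < (ofScalars 𝕜 c).radius) (n : ℕ) :
    Tendsto (iteratedDeriv n (ofScalarsSum c)) (𝓝 0) (𝓝 (n ! * c n)) := by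
  have h := ((ofScalars 𝕜 c).hasFPowerSeriesOnBall hc).hasFPowerSeriesAt
  have hcoeff := congrFun
    (ofScalars_series_injective 𝕜 𝕜 (h.eq_formalMultilinearSeries h.analyticAt.hasFPowerSeriesAt)) n
  rw [hcoeff, mul_div_cancel₀ _ (by exact_mod_cast n.factorial_ne_zero), ofScalarsSum,
    iteratedDeriv_eq_iterate]
  exact (h.analyticAt.iterated_deriv n).continuousAt.tendsto

theorem Real.hasSum_log_one_add_div_self {x : ℝ} (hx : |x| < 1) (hx₀ : x ≠ 0) :
    HasSum (fun k : ℕ => (-1) ^ k / (k + 1) * x ^ k) (log (1 + x) / x) := by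
  have h := (Real.hasSum_pow_div_log_of_abs_lt_one (x := -x) (by rwa [abs_neg])).mul_left (-x⁻¹)
  rw [sub_neg_eq_add, neg_mul_neg, inv_mul_eq_div] at h
  refine h.congr_fun fun k => ?_
  rw [neg_pow, pow_succ]
  field_simp
  ring

theorem one_le_radius_ofScalars_neg_one_pow_div :
    1 ≤ (ofScalars ℝ fun k : ℕ => (-1 : ℝ) ^ k / (k + 1)).radius := by
  have := (ofScalars ℝ fun k : ℕ => (-1 : ℝ) ^ k / (k + 1)).le_radius_of_bound (r := 1) 1 fun k => by
    rw [ofScalars_norm, NNReal.coe_one, one_pow, mul_one, norm_div, norm_pow, norm_neg, norm_one,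
      one_pow, Real.norm_of_nonneg (by positivity)]
    exact div_le_one_of_le₀ (by simp) (by positivity)
  simpa using this

theorem Real.eqOn_log_one_add_div_self_ofScalarsSum :
    EqOn (fun y : ℝ => log (1 + y) / y) (ofScalarsSum fun k : ℕ => (-1 : ℝ) ^ k / (k + 1))
      (Ioo 0 1) := fun x ⟨hx₀, hx₁⟩ => by
  rw [ofScalars_sum_eq]
  exact ((hasSum_log_one_add_div_self (by rwa [abs_of_pos hx₀]) hx₀.ne').tsum_eq).symm

theorem iteratedDeriv_log_div_self_tendsto (n : ℕ) :
    Filter.Tendsto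
      (fun x : ℝ => (-1 : ℝ) ^ n * iteratedDeriv n (fun y : ℝ => Real.log (1 + y) / y) x)
      (nhdsWithin 0 (Set.Ioi 0)) (nhds ((n.factorial : ℝ) / (n + 1))) := by
  set c : ℕ → ℝ := fun k => (-1) ^ k / (k + 1)
  have hc : 0 < (ofScalars ℝ c).radius :=
    zero_lt_one.trans_le one_le_radius_ofScalars_neg_one_pow_div
  have hval : (-1 : ℝ) ^ n * (n ! * c n) = n ! / (n + 1) := by
    rw [mul_left_comm, ← mul_div_assoc, ← mul_pow, neg_one_mul, neg_neg, one_pow, mul_one_div]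
  have hlim : Tendsto (fun x => (-1 : ℝ) ^ n * iteratedDeriv n (ofScalarsSum c) x) (𝓝[>] 0)
      (𝓝 (n ! / (n + 1))) :=
    hval ▸ ((tendsto_iteratedDeriv_ofScalarsSum hc n).mono_left nhdsWithin_le_nhds).const_mul _
  refine hlim.congr' (eventually_of_mem (Ioo_mem_nhdsGT one_pos) fun x hx => ?_)
  dsimp only
  rw [Real.eqOn_log_one_add_div_self_ofScalarsSum.iteratedDeriv_of_isOpen isOpen_Ioo n hx]
end

section
/- (Mean value theorem for divided differences.) Let n ≥ 2 and let x_1, …, x_n be pairwise distinct real numbers with m := min_i x_i and M := max_i x_i. Let f be continuous on [m, M] and (n−1)-times continuously differentiable on (m, M). Then there exists x_0 ∈ (m, M) such that the divided difference [x_1, …, x_n; f] := ∑_{i=1}^n f(x_i) / ∏_{j=1, j≠i}^n (x_i − x_j) equals f^{(n−1)}(x_0) / (n−1)!. -/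
/-!
Let `P` be the Lagrange interpolation polynomial of `f` at the nodes: its coefficient of degree
`n - 1` is the divided difference, so `P⁽ⁿ⁻¹⁾ = (n - 1)! [x_1, …, x_n; f]`. The function `f - P`
vanishes at the `n` nodes, hence applying Rolle's theorem `n - 1` times between consecutive zeros
produces `x₀ ∈ (m, M)` with `(f - P)⁽ⁿ⁻¹⁾(x₀) = 0`.
-/

open Finset Polynomial

theorem Polynomial.deriv_eval {𝕜 : Type*} [NontriviallyNormedField 𝕜] (p : 𝕜[X]) :
    deriv (fun y => p.eval y) = fun y => (derivative p).eval y := by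
  ext
  exact p.deriv

theorem Polynomial.iterate_deriv_eval {𝕜 : Type*} [NontriviallyNormedField 𝕜] (p : 𝕜[X])
    (k : ℕ) (y : 𝕜) : deriv^[k] (fun y => p.eval y) y = (derivative^[k] p).eval y := by
  induction k generalizing p with
  | zero => rfl
  | succ k ih => rw [Function.iterate_succ_apply, Function.iterate_succ_apply, deriv_eval, ih]

theorem Polynomial.iterate_derivative_of_natDegree_le {R : Type*} [CommSemiring R] {p : R[X]}
    {k : ℕ} (hp : p.natDegree ≤ k) : derivative^[k] p = C (k.factorial * p.coeff k) := by
  rw [eq_C_of_natDegree_le_zero ((natDegree_iterate_derivative p k).trans (by omega)),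
    coeff_iterate_derivative, zero_add, Nat.descFactorial_self, nsmul_eq_mul]

theorem Lagrange.natDegree_interpolate_le {F ι : Type*} [Field F] [DecidableEq ι]
    {s : Finset ι} {v : ι → F} (hvs : Set.InjOn v s) (r : ι → F) :
    (interpolate s v r).natDegree ≤ #s - 1 :=
  natDegree_le_iff_degree_le.2 (degree_interpolate_le r hvs)

theorem Lagrange.coeff_interpolate_card_sub_one {F ι : Type*} [Field F] [DecidableEq ι]
    {s : Finset ι} {v : ι → F} (hvs : Set.InjOn v s) (r : ι → F) :
    (interpolate s v r).coeff (#s - 1) = ∑ i ∈ s, r i / ∏ j ∈ s.erase i, (v i - v j) := by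
  rw [coeff_eq_sum hvs (degree_interpolate_lt r hvs)]
  exact sum_congr rfl fun i hi => by rw [eval_interpolate_at_node r hvs hi]

theorem Lagrange.exists_natDegree_le_coeff_eq_sum {F : Type*} [Field F] {n : ℕ} {x : Fin n → F}
    (hx : Function.Injective x) (r : Fin n → F) :
    ∃ P : F[X], P.natDegree ≤ n - 1 ∧
      P.coeff (n - 1) = ∑ i, r i / ∏ j ∈ univ.erase i, (x i - x j) ∧ ∀ i, P.eval (x i) = r i := by
  refine ⟨interpolate univ x r, ?_, ?_, fun i => eval_interpolate_at_node r hx.injOn (mem_univ i)⟩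
  · simpa only [card_univ, Fintype.card_fin] using natDegree_interpolate_le (s := univ) hx.injOn r
  · simpa only [card_univ, Fintype.card_fin] using
      coeff_interpolate_card_sub_one (s := univ) hx.injOn r

section Rolle

open Set

theorem exists_finset_deriv_eq_zero {U : Set ℝ} (hU : U.OrdConnected) {g : ℝ → ℝ}
    (hg : ContinuousOn g U) {k : ℕ} {s : Finset ℝ} (hs : #s = k + 1) (hsU : ↑s ⊆ U)
    (hzero : ∀ y ∈ s, g y = 0) :
    ∃ u : Finset ℝ, #u = k ∧ ↑u ⊆ interior U ∧ ∀ y ∈ u, deriv g y = 0 := by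
  let e := s.orderIsoOfFin hs
  have hlt (i : Fin k) : (e i.castSucc : ℝ) < e i.succ := e.strictMono i.castSucc_lt_succ
  have hIcc (i : Fin k) : Icc (e i.castSucc : ℝ) (e i.succ) ⊆ U :=
    hU.out (hsU (e i.castSucc).2) (hsU (e i.succ).2)
  have hrolle (i : Fin k) : ∃ c ∈ Ioo (e i.castSucc : ℝ) (e i.succ), deriv g c = 0 :=
    exists_deriv_eq_zero (hlt i) (hg.mono (hIcc i))
      (by rw [hzero _ (e i.castSucc).2, hzero _ (e i.succ).2])
  choose c hc hc0 using hrolle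
  have hc_mono : StrictMono c := fun i j hij =>
    calc c i < e i.succ := (hc i).2
      _ ≤ e j.castSucc := e.monotone (Fin.succ_le_castSucc_iff.mpr hij)
      _ < c j := (hc j).1
  refine ⟨univ.image c, by simp [card_image_of_injective _ hc_mono.injective], ?_, ?_⟩
  · simp only [coe_image, coe_univ, image_univ, range_subset_iff]
    exact fun i => interior_mono (hIcc i) (by rw [interior_Icc]; exact hc i)
  · simpa using hc0

theorem exists_iterate_deriv_eq_zero {U : Set ℝ} (hU : U.OrdConnected) {g : ℝ → ℝ} {k : ℕ}
    (hg : ∀ j < k, ContinuousOn (deriv^[j] g) U) {s : Finset ℝ} (hs : #s = k + 1)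
    (hsU : ↑s ⊆ U) (hzero : ∀ y ∈ s, g y = 0) : ∃ c ∈ U, deriv^[k] g c = 0 := by
  induction k generalizing g s with
  | zero =>
    obtain ⟨y, hy⟩ := card_pos.mp (by omega : 0 < #s)
    exact ⟨y, hsU hy, hzero y hy⟩
  | succ k ih =>
    obtain ⟨u, hu, huU, hu0⟩ := exists_finset_deriv_eq_zero hU (hg 0 k.succ_pos) hs hsU hzero
    exact ih (fun j hj => hg (j + 1) (by omega)) hu (huU.trans interior_subset) hu0

theorem exists_iteratedDerivWithin_eq_zero {a b : ℝ} {g : ℝ → ℝ} {k : ℕ}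
    (hg : ContinuousOn g (Icc a b)) (hg' : ContDiffOn ℝ k g (Ioo a b)) {s : Finset ℝ}
    (hs : #s = k + 2) (hsab : ↑s ⊆ Icc a b) (hzero : ∀ y ∈ s, g y = 0) :
    ∃ c ∈ Ioo a b, iteratedDerivWithin (k + 1) g (Ioo a b) c = 0 := by
  obtain ⟨u, hu, huI, hu0⟩ := exists_finset_deriv_eq_zero ordConnected_Icc hg hs hsab hzero
  rw [interior_Icc] at huI
  have hcont (j : ℕ) (hj : j < k) : ContinuousOn (deriv^[j + 1] g) (Ioo a b) :=
    (hg'.continuousOn_iteratedDerivWithin (by exact_mod_cast hj) (uniqueDiffOn_Ioo a b)).congr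
      (iteratedDerivWithin_of_isOpen_eq_iterate isOpen_Ioo).symm
  obtain ⟨c, hc, hc0⟩ := exists_iterate_deriv_eq_zero ordConnected_Ioo hcont hu huI hu0
  exact ⟨c, hc, (iteratedDerivWithin_of_isOpen_eq_iterate isOpen_Ioo hc).trans hc0⟩

end Rolle

theorem mean_value_divided_differences (n : ℕ) (hn : 2 ≤ n) (x : Fin n → ℝ)
    (hinj : Function.Injective x) (f : ℝ → ℝ) (m M : ℝ)
    (hm : m = Finset.univ.inf' ⟨⟨0, by omega⟩, Finset.mem_univ _⟩ x)
    (hM : M = Finset.univ.sup' ⟨⟨0, by omega⟩, Finset.mem_univ _⟩ x)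
    (hf : ContinuousOn f (Set.Icc m M))
    (hf' : ContDiffOn ℝ (n - 1) f (Set.Ioo m M)) :
    ∃ x₀ ∈ Set.Ioo m M,
      ∑ i, f (x i) / (∏ j ∈ Finset.univ.erase i, (x i - x j)) =
        iteratedDerivWithin (n - 1) f (Set.Ioo m M) x₀ / (n - 1).factorial := by
  obtain ⟨P, hPdeg, hPcoeff, hPnodes⟩ :=
    Lagrange.exists_natDegree_le_coeff_eq_sum hinj (fun i => f (x i))
  have hP (k : ℕ) : ContDiff ℝ k fun y => P.eval y := by
    simpa using P.contDiff_aeval (𝕜 := ℝ) k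
  have hf_nat : ContDiffOn ℝ (n - 1 : ℕ) f (Set.Ioo m M) := by
    convert hf'; norm_cast
  have hnodes : ↑(univ.image x) ⊆ Set.Icc m M := by
    simp only [coe_image, coe_univ, Set.image_univ, Set.range_subset_iff]
    exact fun i => ⟨hm ▸ inf'_le x (mem_univ i), hM ▸ le_sup' x (mem_univ i)⟩
  obtain ⟨c, hc, hc0⟩ := exists_iteratedDerivWithin_eq_zero (k := n - 2)
    (hf.sub (hP 0).continuous.continuousOn)
    ((hf_nat.of_le (by norm_cast; omega)).sub (hP _).contDiffOn)
    (by rw [Finset.card_image_of_injective _ hinj, card_univ, Fintype.card_fin]; omega) hnodes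
    (by simp [hPnodes])
  rw [show n - 2 + 1 = n - 1 by omega, iteratedDerivWithin_sub hc (uniqueDiffOn_Ioo m M)
    (hf_nat c hc) (hP _).contDiffWithinAt, sub_eq_zero] at hc0
  have hPderiv : iteratedDerivWithin (n - 1) (fun y => P.eval y) (Set.Ioo m M) c =
      (n - 1).factorial * P.coeff (n - 1) := by
    rw [iteratedDerivWithin_of_isOpen_eq_iterate isOpen_Ioo hc, P.iterate_deriv_eval,
      iterate_derivative_of_natDegree_le hPdeg, eval_C]
  refine ⟨c, hc, ?_⟩
  rw [hc0, hPderiv, hPcoeff]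
  field_simp
end

section
/- Let n ≥ 1, let k_1, …, k_n be pairwise distinct strictly positive real numbers, and let y_0 < 0. Then the function g(x) := (∏_{i=1}^n k_i) / (−x · ∏_{i=1}^n (k_i − x)) is integrable on (−∞, y_0), and ∫_{−∞}^{y_0} g(x) dx = ∑_{i=1}^n [(∏_{j≠i} k_j) / (∏_{j≠i} (k_j − k_i))] · ln(1 + k_i/(−y_0)). -/
/-!
Substituting `t = -x` moves the integral to `(-y₀, ∞)`. Lagrange interpolation of the constant `1`
at the nodes `-kᵢ` yields the partial fraction decomposition of `1 / ∏ (kᵢ + t)`, which splits the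
integrand into multiples of `kᵢ / (t (kᵢ + t))`; each of these has the antiderivative
`-log (1 + kᵢ / t)`, which vanishes at infinity.
-/

open Finset MeasureTheory Set Filter Topology

theorem integrableOn_Iio_comp_neg_iff {E : Type*} [NormedAddCommGroup E] (f : ℝ → E) (b : ℝ) :
    IntegrableOn (fun x => f (-x)) (Iio b) ↔ IntegrableOn f (Ioi (-b)) := by
  rw [← (Measure.measurePreserving_neg (volume : Measure ℝ)).integrableOn_comp_preimage
    (Homeomorph.neg ℝ).measurableEmbedding (f := f), neg_preimage, neg_Ioi, neg_neg]
  rfl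

theorem integral_Iio_comp_neg {E : Type*} [NormedAddCommGroup E] [NormedSpace ℝ E]
    (f : ℝ → E) (b : ℝ) : ∫ x in Iio b, f (-x) = ∫ x in Ioi (-b), f x := by
  rw [← integral_Iic_eq_integral_Iio, integral_comp_neg_Iic]

theorem hasDerivAt_neg_log_one_add_div {c t : ℝ} (hc : 0 ≤ c) (ht : 0 < t) :
    HasDerivAt (fun t => -Real.log (1 + c / t)) (c / (t * (c + t))) t := by
  have hu : HasDerivAt (fun t => 1 + c / t) (c * -(t ^ 2)⁻¹) t := by
    simpa [div_eq_mul_inv] using ((hasDerivAt_inv ht.ne').const_mul c).const_add 1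
  have hpos : 0 < 1 + c / t := by positivity
  refine (hu.log hpos.ne').neg.congr_deriv ?_
  field_simp
  ring

theorem tendsto_log_one_add_div_atTop (c : ℝ) :
    Tendsto (fun t => Real.log (1 + c / t)) atTop (𝓝 0) := by
  have h : Tendsto (fun t : ℝ => 1 + c / t) atTop (𝓝 1) := by
    simpa using (tendsto_const_nhds (x := c).div_atTop tendsto_id).const_add 1
  simpa using h.log one_ne_zero

section

variable {a c : ℝ}

theorem div_mul_add_nonneg_of_mem_Ioi (hc : 0 ≤ c) (ha : 0 < a) :
    ∀ t ∈ Ioi a, 0 ≤ c / (t * (c + t)) :=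
  fun t ht => by have : 0 < t := ha.trans ht; positivity

theorem integrableOn_Ioi_div_mul_add (hc : 0 ≤ c) (ha : 0 < a) :
    IntegrableOn (fun t => c / (t * (c + t))) (Ioi a) :=
  integrableOn_Ioi_deriv_of_nonneg'
    (fun t ht => hasDerivAt_neg_log_one_add_div hc (ha.trans_le ht))
    (div_mul_add_nonneg_of_mem_Ioi hc ha) (by simpa using (tendsto_log_one_add_div_atTop c).neg)

theorem integral_Ioi_div_mul_add (hc : 0 ≤ c) (ha : 0 < a) :
    ∫ t in Ioi a, c / (t * (c + t)) = Real.log (1 + c / a) := by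
  rw [integral_Ioi_of_hasDerivAt_of_nonneg'
    (fun t ht => hasDerivAt_neg_log_one_add_div hc (ha.trans_le ht))
    (div_mul_add_nonneg_of_mem_Ioi hc ha) (by simpa using (tendsto_log_one_add_div_atTop c).neg)]
  ring

end

theorem Lagrange.inv_prod_sub_eq_sum_nodalWeight {F ι : Type*} [Field F] [DecidableEq ι]
    {s : Finset ι} {v : ι → F} {x : F} (hvs : Set.InjOn v s) (hs : s.Nonempty)
    (hx : ∀ i ∈ s, x ≠ v i) :
    (∏ i ∈ s, (x - v i))⁻¹ = ∑ i ∈ s, nodalWeight s v i * (x - v i)⁻¹ := by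
  have h := eval_interpolate_not_at_node 1 hx
  simp only [interpolate_one hvs hs, Polynomial.eval_one, eval_nodal, Pi.one_apply,
    mul_one] at h
  exact inv_eq_of_mul_eq_one_right h.symm

theorem prod_div_mul_prod_add_eq_sum {F ι : Type*} [Field F] [Fintype ι] [DecidableEq ι]
    [Nonempty ι] {k : ι → F} (hk : Function.Injective k) {t : F} (hkt : ∀ i, k i + t ≠ 0) :
    (∏ i, k i) / (t * ∏ i, (k i + t)) =
      ∑ i, (∏ j ∈ univ.erase i, k j) / (∏ j ∈ univ.erase i, (k j - k i)) *
        (k i / (t * (k i + t))) := by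
  have hpf := Lagrange.inv_prod_sub_eq_sum_nodalWeight (v := fun i => -k i) (x := t)
    (neg_injective.comp hk).injOn univ_nonempty
    fun i _ => by rw [ne_eq, eq_neg_iff_add_eq_zero, add_comm]; exact hkt i
  simp only [sub_neg_eq_add, Lagrange.nodalWeight, neg_add_eq_sub, prod_inv_distrib] at hpf
  calc (∏ i, k i) / (t * ∏ i, (k i + t))
      = (∏ i, k i) / t * (∏ i, (t + k i))⁻¹ := by simp_rw [add_comm t]; ring
    _ = ∑ i, (∏ i, k i) / t * ((∏ j ∈ univ.erase i, (k j - k i))⁻¹ * (t + k i)⁻¹) := by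
      rw [hpf, mul_sum]
    _ = _ := sum_congr rfl fun i _ => by
      rw [← mul_prod_erase univ k (mem_univ i), div_eq_mul_inv _ (t * _), mul_inv, add_comm t]
      ring

theorem integral_neg_tail (n : ℕ) (hn : 1 ≤ n) (k : Fin n → ℝ) (hk : ∀ i, 0 < k i)
    (hinj : Function.Injective k) (y₀ : ℝ) (hy₀ : y₀ < 0) :
    IntegrableOn (fun x : ℝ => (∏ i, k i) / (-x * ∏ i, (k i - x))) (Set.Iio y₀) ∧
    ∫ x in Set.Iio y₀, (∏ i, k i) / (-x * ∏ i, (k i - x)) =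
      ∑ i, ((∏ j ∈ Finset.univ.erase i, k j) / (∏ j ∈ Finset.univ.erase i, (k j - k i))) *
        Real.log (1 + k i / (-y₀)) := by
  have : Nonempty (Fin n) := Fin.pos_iff_nonempty.mp hn
  have ha : 0 < -y₀ := neg_pos.mpr hy₀
  set A : Fin n → ℝ := fun i =>
    (∏ j ∈ univ.erase i, k j) / (∏ j ∈ univ.erase i, (k j - k i))
  set g : ℝ → ℝ := fun t => (∏ i, k i) / (t * ∏ i, (k i + t))
  have hsub : (fun x : ℝ => (∏ i, k i) / (-x * ∏ i, (k i - x))) = fun x => g (-x) := by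
    simp only [g, sub_eq_add_neg]
  have hpf : EqOn g (fun t => ∑ i, A i * (k i / (t * (k i + t)))) (Ioi (-y₀)) := fun t ht =>
    prod_div_mul_prod_add_eq_sum hinj fun i => (add_pos (hk i) (ha.trans ht)).ne'
  have hterm (i : Fin n) : IntegrableOn (fun t => A i * (k i / (t * (k i + t)))) (Ioi (-y₀)) :=
    (integrableOn_Ioi_div_mul_add (hk i).le ha).const_mul (A i)
  rw [hsub, integrableOn_Iio_comp_neg_iff, integral_Iio_comp_neg,
    integrableOn_congr_fun hpf measurableSet_Ioi, setIntegral_congr_fun measurableSet_Ioi hpf,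
    integral_finsetSum _ fun i _ => hterm i]
  refine ⟨integrable_finsetSum _ fun i _ => hterm i, sum_congr rfl fun i _ => ?_⟩
  rw [integral_const_mul, integral_Ioi_div_mul_add (hk i).le ha]
end

section
/- Let n ≥ 1, let k_1, …, k_n be pairwise distinct strictly positive real numbers, and let y_0 > max_i k_i. Then the function h(x) := (∏_{i=1}^n k_i) / (x · ∏_{i=1}^n (x − k_i)) is integrable on (y_0, ∞), and ∫_{y_0}^{∞} h(x) dx = −∑_{i=1}^n [(∏_{j≠i} k_j) / (∏_{j≠i} (k_i − k_j))] · ln(1 − k_i/y_0). -/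
open Finset MeasureTheory Filter Topology

/-!
By partial fractions (Lagrange interpolation of the constant `1` at the nodes `k i`) the integrand
equals `∑ i, B i * k i / (x * (x - k i))`, the derivative of `F x = ∑ i, B i * log (1 - k i / x)`.
The integrand is nonnegative on `(y₀, ∞)` and `F x → 0` as `x → ∞`, so the improper integral
converges and equals `0 - F y₀`.
-/

section PartialFractions

variable {ι F : Type*} [Field F] [DecidableEq ι] {s : Finset ι} {v : ι → F}

theorem sum_prod_sub_div_prod_sub_eq_one_s12 (hvs : Set.InjOn v s) (hs : s.Nonempty) (x : F) :
    ∑ i ∈ s, (∏ j ∈ s.erase i, (x - v j)) / ∏ j ∈ s.erase i, (v i - v j) = 1 := by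
  simpa [Polynomial.eval_finsetSum, Lagrange.basis, Polynomial.eval_prod,
    Lagrange.basisDivisor, prod_div_distrib, div_eq_inv_mul, prod_mul_distrib, prod_inv_distrib]
    using congrArg (Polynomial.eval x) (Lagrange.sum_basis hvs hs)

theorem prod_div_mul_prod_sub_eq_sum (hvs : Set.InjOn v s) (hs : s.Nonempty) {x : F}
    (hx : x ≠ 0) (hxv : ∀ i ∈ s, x ≠ v i) :
    (∏ i ∈ s, v i) / (x * ∏ i ∈ s, (x - v i)) =
      ∑ i ∈ s, (∏ j ∈ s.erase i, v j) / (∏ j ∈ s.erase i, (v i - v j)) *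
        (v i / (x * (x - v i))) := by
  rw [← mul_one (_ / _), ← sum_prod_sub_div_prod_sub_eq_one_s12 hvs hs x, mul_sum]
  refine sum_congr rfl fun i hi => ?_
  have hxi : x - v i ≠ 0 := sub_ne_zero.mpr (hxv i hi)
  have hxs : ∏ j ∈ s.erase i, (x - v j) ≠ 0 :=
    prod_ne_zero_iff.mpr fun j hj => sub_ne_zero.mpr (hxv j (mem_of_mem_erase hj))
  have hvs' : ∏ j ∈ s.erase i, (v i - v j) ≠ 0 :=
    prod_ne_zero_iff.mpr fun j hj => sub_ne_zero.mpr fun h =>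
      ne_of_mem_erase hj (hvs (mem_of_mem_erase hj) hi h.symm)
  rw [← mul_prod_erase s v hi, ← mul_prod_erase s (fun j => x - v j) hi]
  field_simp

end PartialFractions

theorem Real.hasDerivAt_log_one_sub_div {c x : ℝ} (hx : x ≠ 0) (hxc : x ≠ c) :
    HasDerivAt (fun y => Real.log (1 - c / y)) (c / (x * (x - c))) x := by
  have hxc' : x - c ≠ 0 := sub_ne_zero.mpr hxc
  have h : 1 - c / x ≠ 0 := by rw [one_sub_div hx]; exact div_ne_zero hxc' hx
  convert (((hasDerivAt_inv hx).const_mul c).const_sub 1).log h using 1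
  · simp only [div_eq_mul_inv]
  · field_simp

theorem Real.tendsto_log_one_sub_div_atTop (c : ℝ) :
    Tendsto (fun x => Real.log (1 - c / x)) atTop (𝓝 0) := by
  simpa using ((tendsto_const_nhds.div_atTop tendsto_id).const_sub 1).log (by simp)

theorem integral_pos_tail (n : ℕ) (hn : 1 ≤ n) (k : Fin n → ℝ) (hk : ∀ i, 0 < k i)
    (hinj : Function.Injective k) (y₀ : ℝ) (hy₀ : ∀ i, k i < y₀) :
    IntegrableOn (fun x : ℝ => (∏ i, k i) / (x * ∏ i, (x - k i))) (Set.Ioi y₀) ∧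
    ∫ x in Set.Ioi y₀, (∏ i, k i) / (x * ∏ i, (x - k i)) =
      -∑ i, ((∏ j ∈ Finset.univ.erase i, k j) / (∏ j ∈ Finset.univ.erase i, (k i - k j))) *
        Real.log (1 - k i / y₀) := by
  have hne : (univ : Finset (Fin n)).Nonempty := ⟨⟨0, hn⟩, mem_univ _⟩
  obtain ⟨i₀, -⟩ := id hne
  set B : Fin n → ℝ := fun i => (∏ j ∈ univ.erase i, k j) / ∏ j ∈ univ.erase i, (k i - k j)
  set F : ℝ → ℝ := fun x => ∑ i, B i * Real.log (1 - k i / x)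
  have hderiv : ∀ x ∈ Set.Ici y₀, HasDerivAt F ((∏ i, k i) / (x * ∏ i, (x - k i))) x := by
    intro x hx
    have hxk : ∀ i, k i < x := fun i => (hy₀ i).trans_le hx
    have hx0 : x ≠ 0 := ((hk i₀).trans (hxk i₀)).ne'
    rw [prod_div_mul_prod_sub_eq_sum hinj.injOn hne hx0 fun i _ => (hxk i).ne']
    exact HasDerivAt.fun_sum fun i _ =>
      (Real.hasDerivAt_log_one_sub_div hx0 (hxk i).ne').const_mul (B i)
  have hnonneg : ∀ x ∈ Set.Ioi y₀, 0 ≤ (∏ i, k i) / (x * ∏ i, (x - k i)) := fun x hx =>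
    have hxk : ∀ i, k i < x := fun i => (hy₀ i).trans hx
    div_nonneg (prod_pos fun i _ => hk i).le
      (mul_pos ((hk i₀).trans (hxk i₀)) (prod_pos fun i _ => sub_pos.mpr (hxk i))).le
  have hlim : Tendsto F atTop (𝓝 0) := by
    simpa using tendsto_finsetSum univ fun i _ =>
      (Real.tendsto_log_one_sub_div_atTop (k i)).const_mul (B i)
  have hcont : ContinuousWithinAt F (Set.Ici y₀) y₀ :=
    (hderiv y₀ Set.self_mem_Ici).continuousAt.continuousWithinAt
  have hderiv' := fun x (hx : x ∈ Set.Ioi y₀) => hderiv x (Set.Ioi_subset_Ici_self hx)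
  refine ⟨integrableOn_Ioi_deriv_of_nonneg hcont hderiv' hnonneg hlim, ?_⟩
  rw [integral_Ioi_of_hasDerivAt_of_nonneg hcont hderiv' hnonneg hlim, zero_sub]
end

section
/- Let n ≥ 1, let k_1 < k_2 < … < k_n be strictly positive real numbers, and let f(u) := (−1)^{n+1} · u · ∏_{i=1}^n (1 − u/k_i). Let I ⊆ ℝ be an open interval containing 0 and let y : I → ℝ be differentiable with y′(t) = f(y(t)) for all t ∈ I and y(0) ∈ [0, k_n]. Then y(t) ∈ [0, k_n] for all t ∈ I. -/
open Finset

/-!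
Both endpoints `0` and `k_n` of the interval are zeros of the locally Lipschitz field `f`, so the
constant functions `0` and `k_n` are solutions. By uniqueness of solutions, a trajectory that
meets an equilibrium at one time equals it at all times; by the intermediate value theorem, a
trajectory that leaves `[0, k_n]` would have to meet `0` or `k_n` first.
-/

lemma exists_Icc_subset_of_isOpen_of_ordConnected {α : Type*} [LinearOrder α] [TopologicalSpace α]
    [OrderTopology α] [DenselyOrdered α] [NoMinOrder α] [NoMaxOrder α] {I : Set α}
    (hIo : IsOpen I) (hIc : I.OrdConnected) {t₀ t₁ : α} (h₀ : t₀ ∈ I) (h₁ : t₁ ∈ I) :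
    ∃ a b, t₀ ∈ Set.Ioo a b ∧ t₁ ∈ Set.Ioo a b ∧ Set.Icc a b ⊆ I := by
  obtain ⟨a, ha, haI⟩ := (hIo.eventually_mem (min_rec' I h₀ h₁)).exists_lt
  obtain ⟨b, hb, hbI⟩ := (hIo.eventually_mem (max_rec' I h₀ h₁)).exists_gt
  rw [lt_min_iff] at ha
  rw [max_lt_iff] at hb
  exact ⟨a, b, ⟨ha.1, hb.1⟩, ⟨ha.2, hb.2⟩, hIc.out haI hbI⟩

section Equilibrium

variable {E : Type*} [NormedAddCommGroup E] [NormedSpace ℝ E] {f : E → E} {c : E}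
  {I : Set ℝ} {y : ℝ → E} {t₀ : ℝ}

theorem ODE_solution_eq_of_eq_equilibrium (hf : LocallyLipschitz f) (hc : f c = 0)
    (hIo : IsOpen I) (hIc : I.OrdConnected) (hy : ∀ t ∈ I, HasDerivAt y (f (y t)) t)
    (ht₀ : t₀ ∈ I) (hyt₀ : y t₀ = c) : ∀ t ∈ I, y t = c := by
  intro t ht
  obtain ⟨a, b, ht₀ab, htab, hab⟩ := exists_Icc_subset_of_isOpen_of_ordConnected hIo hIc ht₀ ht
  have hs : IsCompact (insert c (y '' Set.Icc a b)) :=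
    (isCompact_Icc.image_of_continuousOn
      fun u hu ↦ (hy u (hab hu)).continuousAt.continuousWithinAt).insert c
  obtain ⟨K, hK⟩ := hf.locallyLipschitzOn.exists_lipschitzOnWith_of_compact hs
  exact ODE_solution_unique_of_mem_Ioo (v := fun _ ↦ f) (fun _ _ ↦ hK) ht₀ab
    (fun u hu ↦ ⟨hy u (hab (Set.Ioo_subset_Icc_self hu)),
      Set.mem_insert_of_mem _ (Set.mem_image_of_mem _ (Set.Ioo_subset_Icc_self hu))⟩)
    (fun u _ ↦ ⟨hc ▸ hasDerivAt_const u c, Set.mem_insert c _⟩) hyt₀ htab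

end Equilibrium

section Scalar

variable {f : ℝ → ℝ} {I : Set ℝ} {y : ℝ → ℝ} {t₀ t : ℝ}

theorem ODE_solution_eq_of_equilibrium_mem_uIcc {c : ℝ} (hf : LocallyLipschitz f)
    (hc : f c = 0) (hIo : IsOpen I) (hIc : I.OrdConnected)
    (hy : ∀ t ∈ I, HasDerivAt y (f (y t)) t) (ht₀ : t₀ ∈ I) (ht : t ∈ I)
    (hcy : c ∈ Set.uIcc (y t₀) (y t)) : y t = c := by
  have hsub : Set.uIcc t₀ t ⊆ I := hIc.uIcc_subset ht₀ ht
  obtain ⟨s, hs, hys⟩ := intermediate_value_uIcc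
    (fun u hu ↦ (hy u (hsub hu)).continuousAt.continuousWithinAt) hcy
  exact ODE_solution_eq_of_eq_equilibrium hf hc hIo hIc hy (hsub hs) hys t ht

theorem ODE_solution_mem_Icc_of_equilibria {a b : ℝ} (hf : LocallyLipschitz f)
    (ha : f a = 0) (hb : f b = 0) (hIo : IsOpen I) (hIc : I.OrdConnected)
    (hy : ∀ t ∈ I, HasDerivAt y (f (y t)) t) (ht₀ : t₀ ∈ I) (hyt₀ : y t₀ ∈ Set.Icc a b) :
    ∀ t ∈ I, y t ∈ Set.Icc a b := by
  intro t ht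
  constructor
  · by_contra! h
    have := ODE_solution_eq_of_equilibrium_mem_uIcc hf ha hIo hIc hy ht₀ ht
      (Set.mem_uIcc_of_ge h.le hyt₀.1)
    linarith
  · by_contra! h
    have := ODE_solution_eq_of_equilibrium_mem_uIcc hf hb hIo hIc hy ht₀ ht
      (Set.mem_uIcc_of_le hyt₀.2 h.le)
    linarith

end Scalar

theorem invariance_of_Icc (n : ℕ) (hn : 1 ≤ n) (k : Fin n → ℝ)
    (hk : ∀ i, 0 < k i)
    (f : ℝ → ℝ) (hf : ∀ u, f u = (-1 : ℝ) ^ (n + 1) * u * ∏ i, (1 - u / k i))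
    (I : Set ℝ) (hIopen : IsOpen I) (hIconn : I.OrdConnected) (h0 : (0 : ℝ) ∈ I)
    (y : ℝ → ℝ) (hy : ∀ t ∈ I, HasDerivAt y (f (y t)) t)
    (hy0 : y 0 ∈ Set.Icc 0 (k ⟨n - 1, by omega⟩)) :
    ∀ t ∈ I, y t ∈ Set.Icc 0 (k ⟨n - 1, by omega⟩) := by
  have hf_smooth : ContDiff ℝ 1 f := by
    rw [funext hf]
    fun_prop
  have hf_zero : f 0 = 0 := by simp [hf]
  have hf_last : f (k ⟨n - 1, by omega⟩) = 0 := by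
    rw [hf, prod_eq_zero (mem_univ _) (by rw [div_self (hk _).ne', sub_self]), mul_zero]
  exact ODE_solution_mem_Icc_of_equilibria hf_smooth.locallyLipschitz hf_zero hf_last
    hIopen hIconn hy h0 hy0
end

section
/- Let n ≥ 1 be odd, let k_1, …, k_n be pairwise distinct strictly positive real numbers, let f(u) := (−1)^{n+1} · u · ∏_{i=1}^n (1 − u/k_i), and let y_0 < 0. If T > 0 and y : [0, T) → ℝ is differentiable with y(0) = y_0 and y′(t) = f(y(t)) for all t ∈ [0, T), then T ≤ ∑_{i=1}^n [(∏_{j≠i} k_j) / (∏_{j≠i} (k_j − k_i))] · ln(1 + k_i/(−y_0)); i.e., the solution blows up (to −∞) no later than this exact finite time, which in particular is smaller than (∏_{i=1}^n k_i)/(n·(−y_0)^n). -/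
/-!
For `u < 0` the field is `f u = u * ∏ i, (1 - u / k i) < 0`, so a solution never rises above
`y₀ < 0`. By partial fractions, `G := blowUpTime k` is the antiderivative of `-1 / f` on
`(-∞, 0)` vanishing at `-∞`; hence `G (y t) + t` is constant along the solution, and since
`G > 0` every `t` in the lifetime satisfies `t < G y₀`. For the second bound,
`G' u = ∏ k / (-u * ∏ i, (k i - u)) < ∏ k / (-u) ^ (n + 1)`, the derivative of
`∏ k / (n * (-u) ^ n)`, and both functions vanish at `-∞`.
-/

open Finset Filter Topology Set

theorem Lagrange.sum_nodalWeight_mul_inv_sub_s16 {F ι : Type*} [Field F] [DecidableEq ι]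
    {s : Finset ι} {v : ι → F} {x : F} (hvs : Set.InjOn v s) (hs : s.Nonempty)
    (hx : ∀ i ∈ s, x ≠ v i) :
    ∑ i ∈ s, nodalWeight s v i * (x - v i)⁻¹ = (∏ i ∈ s, (x - v i))⁻¹ := by
  have h := eval_interpolate_not_at_node (1 : ι → F) hx
  simp only [interpolate_one hvs hs, Polynomial.eval_one, eval_nodal, Pi.one_apply,
    mul_one] at h
  exact (eq_inv_of_mul_eq_one_right h.symm)

theorem HasDerivWithinAt.Ici_of_Ico {f : ℝ → ℝ} {f' a b x : ℝ}
    (h : HasDerivWithinAt f f' (Ico a b) x) (hx : x ∈ Ico a b) :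
    HasDerivWithinAt f f' (Ici x) x :=
  h.mono_of_mem_nhdsWithin <|
    mem_of_superset (Ico_mem_nhdsGE hx.2) (Ico_subset_Ico_left hx.1)

section Trajectory

variable {y F : ℝ → ℝ} {a b : ℝ}

theorem continuousOn_Icc_of_hasDerivWithinAt_Ico
    (hy : ∀ t ∈ Ico a b, HasDerivWithinAt y (F (y t)) (Ico a b) t) {t : ℝ} (ht : t ∈ Ico a b) :
    ContinuousOn y (Icc a t) := fun s hs =>
  (hy s ⟨hs.1, hs.2.trans_lt ht.2⟩).continuousWithinAt.mono
    (Icc_subset_Ico_right ht.2)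

theorem le_of_hasDerivWithinAt_Ico_of_neg
    (hy : ∀ t ∈ Ico a b, HasDerivWithinAt y (F (y t)) (Ico a b) t) (hF : F (y a) < 0) :
    ∀ t ∈ Ico a b, y t ≤ y a := by
  intro t ht
  refine image_le_of_deriv_right_lt_deriv_boundary
    (continuousOn_Icc_of_hasDerivWithinAt_Ico hy ht) (f' := fun s => F (y s))
    (B := fun _ => y a) (fun s hs => ?_) le_rfl (fun _ => hasDerivAt_const _ (y a))
    (fun s _ hs => by simpa [hs] using hF) ⟨ht.1, le_rfl⟩
  have hs' : s ∈ Ico a b := ⟨hs.1, hs.2.trans ht.2⟩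
  exact (hy s hs').Ici_of_Ico hs'

theorem add_eq_of_hasDerivWithinAt_Ico_of_hasDerivAt_neg_inv {G : ℝ → ℝ}
    (hy : ∀ t ∈ Ico a b, HasDerivWithinAt y (F (y t)) (Ico a b) t)
    (hG : ∀ t ∈ Ico a b, HasDerivAt G (-(F (y t))⁻¹) (y t))
    (hF : ∀ t ∈ Ico a b, F (y t) ≠ 0) :
    ∀ t ∈ Ico a b, G (y t) + t = G (y a) + a := by
  intro t ht
  have hsub : Ico a t ⊆ Ico a b := Ico_subset_Ico_right ht.2.le
  refine constant_of_has_deriv_right_zero (f := fun s => G (y s) + s) ?_ (fun s hs => ?_) t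
    ⟨ht.1, le_rfl⟩
  · refine ContinuousOn.add (fun s hs => ?_) continuousOn_id
    have hs' : s ∈ Ico a b := ⟨hs.1, hs.2.trans_lt ht.2⟩
    exact (hG s hs').continuousAt.comp_continuousWithinAt
      (continuousOn_Icc_of_hasDerivWithinAt_Ico hy ht s hs)
  · -- by the chain rule, `G' (y s) * y' s = -1`
    have h := ((hG s (hsub hs)).comp_hasDerivWithinAt s
      ((hy s (hsub hs)).Ici_of_Ico (hsub hs))).add (hasDerivWithinAt_id s _)
    rwa [neg_mul, inv_mul_cancel₀ (hF s (hsub hs)), neg_add_cancel] at h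

end Trajectory

theorem pos_of_hasDerivAt_pos_of_tendsto_atBot {g g' : ℝ → ℝ} {a u : ℝ}
    (hg : ∀ x < a, HasDerivAt g (g' x) x) (hg' : ∀ x < a, 0 < g' x)
    (hlim : Tendsto g atBot (𝓝 0)) (hu : u < a) : 0 < g u := by
  have hmono : StrictMonoOn g (Iio a) :=
    strictMonoOn_of_hasDerivWithinAt_pos (convex_Iio a)
      (fun x hx => (hg x hx).continuousAt.continuousWithinAt)
      (fun x hx => (hg x (by simpa using hx)).hasDerivWithinAt)
      (fun x hx => hg' x (by simpa using hx))
  have hu₁ : u - 1 ∈ Iio a := by simp only [Set.mem_Iio]; linarith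
  have hle : 0 ≤ g (u - 1) := le_of_tendsto hlim <| by
    filter_upwards [eventually_le_atBot (u - 1)] with v hv
    exact hmono.monotoneOn (hv.trans_lt hu₁ : v ∈ Iio a) hu₁ hv
  exact hle.trans_lt (hmono hu₁ hu (by linarith))

theorem hasDerivAt_div_natCast_mul_neg_pow (c : ℝ) {m : ℕ} (hm : m ≠ 0) {u : ℝ} (hu : u ≠ 0) :
    HasDerivAt (fun v => c / (m * (-v) ^ m)) (c / (-u) ^ (m + 1)) u := by
  obtain ⟨m, rfl⟩ : ∃ m', m = m' + 1 := ⟨m - 1, by omega⟩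
  have hu' : -u ≠ 0 := neg_ne_zero.mpr hu
  have hpow : HasDerivAt (fun v : ℝ => (m + 1 : ℕ) * (-v) ^ (m + 1))
      ((m + 1 : ℕ) * ((m + 1 : ℕ) * (-u) ^ m * -1)) u :=
    ((hasDerivAt_pow (m + 1) (-u)).comp u (hasDerivAt_neg u)).const_mul _
  refine ((hasDerivAt_const u c).div hpow (by positivity)).congr_deriv ?_
  field_simp
  push_cast
  ring

variable {ι : Type*} [Fintype ι] {k : ι → ℝ}

theorem neg_inv_mul_prod_one_sub_div (hk : ∀ i, k i ≠ 0) (u : ℝ) :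
    -(u * ∏ i, (1 - u / k i))⁻¹ = (∏ i, k i) / (-u * ∏ i, (k i - u)) := by
  have : ∏ i, (1 - u / k i) = (∏ i, (k i - u)) / ∏ i, k i := by
    rw [← prod_div_distrib]
    exact prod_congr rfl fun i _ => by field_simp [hk i]
  rw [this, mul_div_assoc', inv_div, neg_mul, div_neg]

variable [DecidableEq ι] (k)

/-- Partial-fraction form of `∫ v in -∞..u, -1 / (v * ∏ i, (1 - v / k i))`: for `u < 0`, the time
the solution of `y' = y * ∏ i, (1 - y / k i)` starting at `u` takes to reach `-∞`. -/
noncomputable def blowUpTime (u : ℝ) : ℝ :=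
  ∑ i, (∏ j ∈ univ.erase i, k j) / (∏ j ∈ univ.erase i, (k j - k i)) *
    Real.log (1 + k i / (-u))

theorem tendsto_blowUpTime_atBot : Tendsto (blowUpTime k) atBot (𝓝 0) := by
  have hlog : ∀ c : ℝ, Tendsto (fun u : ℝ => Real.log (1 + c / (-u))) atBot (𝓝 0) := by
    intro c
    have h : Tendsto (fun u : ℝ => 1 + c / (-u)) atBot (𝓝 1) := by
      simpa using (tendsto_const_nhds.div_atTop tendsto_neg_atBot_atTop).const_add (1 : ℝ)
    simpa [Function.comp_def] using (Real.continuousAt_log one_ne_zero).tendsto.comp h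
  have h := tendsto_finsetSum univ fun i _ => (hlog (k i)).const_mul
    ((∏ j ∈ univ.erase i, k j) / ∏ j ∈ univ.erase i, (k j - k i))
  simp only [mul_zero, sum_const_zero] at h
  exact h

variable {k}

theorem hasDerivAt_log_one_add_div_neg (c : ℝ) {u : ℝ} (hc : 0 ≤ c) (hu : u < 0) :
    HasDerivAt (fun v => Real.log (1 + c / -v)) (c / (-u * (c - u))) u := by
  have hu' : 0 < -u := by linarith
  have hinner : HasDerivAt (fun v => 1 + c / -v) (c * -(-1 / (-u) ^ 2)) u := by
    simpa [div_eq_mul_inv] using (((hasDerivAt_neg u).inv hu'.ne').const_mul c).const_add 1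
  have hpos : 1 + c / -u ≠ 0 := by positivity
  refine (hinner.log hpos).congr_deriv ?_
  have hcu : 0 < c - u := by linarith
  rw [one_add_div hu'.ne', neg_add_eq_sub]
  field_simp

theorem hasDerivAt_blowUpTime (hk : ∀ i, 0 < k i) (hinj : Function.Injective k) [Nonempty ι]
    {u : ℝ} (hu : u < 0) :
    HasDerivAt (blowUpTime k) ((∏ i, k i) / (-u * ∏ i, (k i - u))) u := by
  have hsum := HasDerivAt.fun_sum (u := univ) fun i _ =>
    (hasDerivAt_log_one_add_div_neg (k i) (hk i).le hu).const_mul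
      ((∏ j ∈ univ.erase i, k j) / ∏ j ∈ univ.erase i, (k j - k i))
  -- partial fractions at the nodes `-k i`
  have hpf := Lagrange.sum_nodalWeight_mul_inv_sub_s16 (s := univ) (x := -u)
    (neg_injective.comp hinj).injOn univ_nonempty
    fun i _ => by simp only [Function.comp_apply, ne_eq, neg_inj]; linarith [hk i]
  simp only [Lagrange.nodalWeight, Function.comp_apply, sub_neg_eq_add,
    neg_add_eq_sub, prod_inv_distrib] at hpf
  refine hsum.congr_deriv ?_
  rw [div_mul_eq_div_mul_one_div, one_div, ← hpf, mul_sum]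
  refine sum_congr rfl fun i _ => ?_
  rw [← prod_erase_mul univ k (mem_univ i), div_eq_mul_inv (k i), mul_inv]
  ring

theorem blowUpTime_pos (hk : ∀ i, 0 < k i) (hinj : Function.Injective k) [Nonempty ι]
    {u : ℝ} (hu : u < 0) : 0 < blowUpTime k u :=
  pos_of_hasDerivAt_pos_of_tendsto_atBot (fun _ hx => hasDerivAt_blowUpTime hk hinj hx)
    (fun x hx => div_pos (prod_pos fun i _ => hk i)
      (mul_pos (neg_pos.2 hx) (prod_pos fun i _ => by linarith [hk i])))
    (tendsto_blowUpTime_atBot k) hu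

theorem blowUpTime_lt (hk : ∀ i, 0 < k i) (hinj : Function.Injective k) [Nonempty ι]
    {u : ℝ} (hu : u < 0) :
    blowUpTime k u < (∏ i, k i) / (Fintype.card ι * (-u) ^ Fintype.card ι) := by
  have hP : 0 < ∏ i, k i := prod_pos fun i _ => hk i
  have hderiv_lt : ∀ x < 0,
      (∏ i, k i) / (-x * ∏ i, (k i - x)) < (∏ i, k i) / (-x) ^ (Fintype.card ι + 1) := by
    intro x hx
    have hprod : (-x) ^ Fintype.card ι < ∏ i, (k i - x) := by
      simpa using prod_lt_prod_of_nonempty (fun i _ => neg_pos.2 hx)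
        (fun i _ => by linarith [hk i]) univ_nonempty
    rw [pow_succ']
    exact div_lt_div_of_pos_left hP (by have := neg_pos.2 hx; positivity)
      (mul_lt_mul_of_pos_left hprod (neg_pos.2 hx))
  have hpow : Tendsto (fun v : ℝ => (Fintype.card ι : ℝ) * (-v) ^ Fintype.card ι) atBot atTop :=
    ((tendsto_pow_atTop Fintype.card_ne_zero).comp tendsto_neg_atBot_atTop).const_mul_atTop
      (by exact_mod_cast Fintype.card_pos)
  have hlim := ((tendsto_const_nhds (x := ∏ i, k i)).div_atTop hpow).sub
    (tendsto_blowUpTime_atBot k)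
  rw [sub_zero] at hlim
  refine sub_pos.1 <| pos_of_hasDerivAt_pos_of_tendsto_atBot
    (g := fun v => (∏ i, k i) / (Fintype.card ι * (-v) ^ Fintype.card ι) - blowUpTime k v)
    (fun x hx => (hasDerivAt_div_natCast_mul_neg_pow _ Fintype.card_ne_zero hx.ne).sub
      (hasDerivAt_blowUpTime hk hinj hx))
    (fun x hx => sub_pos.2 (hderiv_lt x hx)) hlim hu

theorem blow_up_forward_general (n : ℕ) (hodd : Odd n)
    (k : Fin n → ℝ) (hk : ∀ i, 0 < k i) (hinj : Function.Injective k)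
    (f : ℝ → ℝ) (hf : ∀ u, f u = (-1 : ℝ) ^ (n + 1) * u * ∏ i, (1 - u / k i))
    (y₀ : ℝ) (hy₀ : y₀ < 0) (T : ℝ)
    (y : ℝ → ℝ) (hy0 : y 0 = y₀)
    (hy : ∀ t ∈ Set.Ico 0 T, HasDerivWithinAt y (f (y t)) (Set.Ico 0 T) t) :
    T ≤ ∑ i, ((∏ j ∈ Finset.univ.erase i, k j) / (∏ j ∈ Finset.univ.erase i, (k j - k i))) *
          Real.log (1 + k i / (-y₀)) ∧
    ∑ i, ((∏ j ∈ Finset.univ.erase i, k j) / (∏ j ∈ Finset.univ.erase i, (k j - k i))) *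
          Real.log (1 + k i / (-y₀)) <
      (∏ i, k i) / (n * (-y₀) ^ n) := by
  have : Nonempty (Fin n) := ⟨⟨0, hodd.pos⟩⟩
  have hf_odd : ∀ u, f u = u * ∏ i, (1 - u / k i) := fun u => by
    rw [hf, hodd.add_one.neg_one_pow, one_mul]
  have hf_neg : ∀ u < 0, f u < 0 := fun u hu => hf_odd u ▸
    mul_neg_of_neg_of_pos hu (prod_pos fun i _ => by
      have := div_neg_of_neg_of_pos hu (hk i); linarith)
  have hy_le := le_of_hasDerivWithinAt_Ico_of_neg hy (hy0 ▸ hf_neg y₀ hy₀)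
  have hy_neg : ∀ t ∈ Ico 0 T, y t < 0 := fun t ht => (hy_le t ht).trans_lt (hy0 ▸ hy₀)
  have htime := add_eq_of_hasDerivWithinAt_Ico_of_hasDerivAt_neg_inv (G := blowUpTime k) hy
    (fun t ht => by
      rw [hf_odd, neg_inv_mul_prod_one_sub_div fun i => (hk i).ne']
      exact hasDerivAt_blowUpTime hk hinj (hy_neg t ht))
    (fun t ht => (hf_neg _ (hy_neg t ht)).ne)
  change T ≤ blowUpTime k y₀ ∧ blowUpTime k y₀ < _
  refine ⟨?_, by simpa using blowUpTime_lt hk hinj hy₀⟩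
  by_contra! hT
  have hG₀ : 0 < blowUpTime k y₀ := blowUpTime_pos hk hinj hy₀
  have ht : blowUpTime k y₀ ∈ Ico 0 T := ⟨hG₀.le, hT⟩
  have hconst := htime _ ht
  rw [hy0, add_zero] at hconst
  linarith [blowUpTime_pos hk hinj (hy_neg _ ht)]

theorem blow_up_forward (n : ℕ) (hn : 1 ≤ n) (hodd : Odd n)
    (k : Fin n → ℝ) (hk : ∀ i, 0 < k i) (hinj : Function.Injective k)
    (f : ℝ → ℝ) (hf : ∀ u, f u = (-1 : ℝ) ^ (n + 1) * u * ∏ i, (1 - u / k i))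
    (y₀ : ℝ) (hy₀ : y₀ < 0) (T : ℝ) (hT : 0 < T)
    (y : ℝ → ℝ) (hy0 : y 0 = y₀)
    (hy : ∀ t ∈ Set.Ico 0 T, HasDerivWithinAt y (f (y t)) (Set.Ico 0 T) t) :
    T ≤ ∑ i, ((∏ j ∈ Finset.univ.erase i, k j) / (∏ j ∈ Finset.univ.erase i, (k j - k i))) *
          Real.log (1 + k i / (-y₀)) ∧
    ∑ i, ((∏ j ∈ Finset.univ.erase i, k j) / (∏ j ∈ Finset.univ.erase i, (k j - k i))) *
          Real.log (1 + k i / (-y₀)) <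
      (∏ i, k i) / (n * (-y₀) ^ n) :=
  blow_up_forward_general n hodd k hk hinj f hf y₀ hy₀ T y hy0 hy
end
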